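/- arXiv:2310.03945 — 8 statements merged into one kernel-verified Lean document; each statement's English description precedes it below -/
import Mathlib

section
/- Let X and Y be square-integrable random vectors on a probability space (Ω, ℙ) with values in ℝⁿ, with means m_X, m_Y and covariance matrices Σ_X, Σ_Y (covariances of the centered vectors X − m_X and Y − m_Y). Then 𝔼‖X − Y‖² ≥ ‖m_X − m_Y‖² + tr(Σ_X) + tr(Σ_Y) − 2·tr((Σ_X^{1/2} Σ_Y Σ_X^{1/2})^{1/2}). -/
open MeasureTheory Matrix
open scoped Classical

/-- The positive semidefinite square root of a matrix (junk value `0` if the matrix is not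
positive semidefinite). -/
noncomputable def psdSqrt {n : ℕ} (A : Matrix (Fin n) (Fin n) ℝ) : Matrix (Fin n) (Fin n) ℝ :=
  if h : A.PosSemidef then
    h.1.eigenvectorUnitary.1 * diagonal ((RCLike.ofReal : ℝ → ℝ) ∘ (√·) ∘ h.1.eigenvalues) *
      (star h.1.eigenvectorUnitary : Matrix (Fin n) (Fin n) ℝ)
  else 0

/-- The covariance matrix of a random vector `X : Ω → ℝⁿ`,
`(Σ_X)_{ij} = 𝔼[(X_i − 𝔼X_i)(X_j − 𝔼X_j)]`. -/
noncomputable def covMatrix {Ω : Type*} [MeasurableSpace Ω] (ℙ : Measure Ω) {n : ℕ}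
    (X : Ω → EuclideanSpace ℝ (Fin n)) : Matrix (Fin n) (Fin n) ℝ :=
  Matrix.of fun i j =>
    ∫ ω, (X ω i - ∫ ω', X ω' i ∂ℙ) * (X ω j - ∫ ω', X ω' j ∂ℙ) ∂ℙ

namespace Matrix.PosSemidef

variable {m : Type*} [Fintype m] [DecidableEq m] {A : Matrix m m ℝ}

/-- The positive semidefinite square root (as in the older Mathlib). -/
noncomputable def sqrt (hA : A.PosSemidef) : Matrix m m ℝ :=
  hA.1.eigenvectorUnitary.1 * diagonal ((RCLike.ofReal : ℝ → ℝ) ∘ (√·) ∘ hA.1.eigenvalues) *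
    (star hA.1.eigenvectorUnitary : Matrix m m ℝ)

lemma spectral_theorem' (hA : A.IsHermitian) :
    A = (hA.eigenvectorUnitary : Matrix m m ℝ) *
      diagonal ((RCLike.ofReal : ℝ → ℝ) ∘ hA.eigenvalues) *
        (star hA.eigenvectorUnitary : Matrix m m ℝ) := by
  conv_lhs => rw [hA.spectral_theorem, Unitary.conjStarAlgAut_apply]

lemma posSemidef_sqrt (hA : A.PosSemidef) : hA.sqrt.PosSemidef := by
  have hD : (diagonal ((RCLike.ofReal : ℝ → ℝ) ∘ (√·) ∘ hA.1.eigenvalues)).PosSemidef :=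
    posSemidef_diagonal_iff.mpr fun i => Real.sqrt_nonneg (hA.1.eigenvalues i)
  have h := hD.mul_mul_conjTranspose_same (hA.1.eigenvectorUnitary : Matrix m m ℝ)
  unfold sqrt
  convert h using 2
  simp [Matrix.star_eq_conjTranspose]

lemma sqrt_mul_self (hA : A.PosSemidef) : hA.sqrt * hA.sqrt = A := by
  have h1 : (star hA.1.eigenvectorUnitary : Matrix m m ℝ) *
      (hA.1.eigenvectorUnitary : Matrix m m ℝ) = 1 := by
    simpa using (Matrix.mem_unitaryGroup_iff'.mp hA.1.eigenvectorUnitary.2)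
  have hE : diagonal ((RCLike.ofReal : ℝ → ℝ) ∘ (√·) ∘ hA.1.eigenvalues) *
      diagonal ((RCLike.ofReal : ℝ → ℝ) ∘ (√·) ∘ hA.1.eigenvalues) =
        diagonal ((RCLike.ofReal : ℝ → ℝ) ∘ hA.1.eigenvalues) := by
    rw [diagonal_mul_diagonal]
    congr 1
    funext i
    simp [Real.mul_self_sqrt (hA.eigenvalues_nonneg i)]
  unfold sqrt
  calc _ = (hA.1.eigenvectorUnitary : Matrix m m ℝ) *
        (diagonal ((RCLike.ofReal : ℝ → ℝ) ∘ (√·) ∘ hA.1.eigenvalues) *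
          ((star hA.1.eigenvectorUnitary : Matrix m m ℝ) *
            (hA.1.eigenvectorUnitary : Matrix m m ℝ)) *
          diagonal ((RCLike.ofReal : ℝ → ℝ) ∘ (√·) ∘ hA.1.eigenvalues)) *
        (star hA.1.eigenvectorUnitary : Matrix m m ℝ) := by simp only [Matrix.mul_assoc]
    _ = A := by rw [h1, Matrix.mul_one, hE]; exact (spectral_theorem' hA.1).symm

end Matrix.PosSemidef

namespace GelbrichAux

open MeasureTheory Matrix Polynomial

variable {m k : Type*} [Fintype m] [Fintype k] [DecidableEq m] [DecidableEq k]

lemma pow_intertwine (R : Matrix m k ℝ) (j : ℕ) :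
    R * (Rᵀ * R) ^ j = (R * Rᵀ) ^ j * R := by
  induction j with
  | zero => simp
  | succ j ih =>
    rw [pow_succ, pow_succ, ← Matrix.mul_assoc, ih]
    simp only [Matrix.mul_assoc]

lemma aeval_intertwine (R : Matrix m k ℝ) (q : ℝ[X]) :
    R * aeval (Rᵀ * R) q = aeval (R * Rᵀ) q * R := by
  induction q using Polynomial.induction_on' with
  | add p q hp hq => simp [Matrix.mul_add, Matrix.add_mul, hp, hq]
  | monomial j c =>
    simp only [aeval_monomial, Algebra.algebraMap_eq_smul_one, smul_mul_assoc, one_mul,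
      Matrix.mul_smul, Matrix.smul_mul]
    rw [pow_intertwine]

lemma trace_aeval_comm (R : Matrix m k ℝ) (q : ℝ[X]) :
    trace (aeval (Rᵀ * R) (X * q)) = trace (aeval (R * Rᵀ) (X * q)) := by
  simp only [_root_.map_mul, aeval_X]
  rw [Matrix.mul_assoc, Matrix.trace_mul_comm, aeval_intertwine, Matrix.mul_assoc,
    Matrix.trace_mul_comm]

lemma aeval_diagonal (d : m → ℝ) (p : ℝ[X]) :
    aeval (diagonal d) p = diagonal (fun i => p.eval (d i)) := by
  induction p using Polynomial.induction_on' with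
  | add p q hp hq => simp [hp, hq, diagonal_add]
  | monomial j c =>
    simp [aeval_monomial, Algebra.algebraMap_eq_smul_one, diagonal_pow,
      ← diagonal_smul, ← diagonal_one, diagonal_mul_diagonal]

lemma aeval_unitary_conj (U : Matrix.unitaryGroup m ℝ) (D : Matrix m m ℝ) (p : ℝ[X]) :
    aeval ((U : Matrix m m ℝ) * D * star (U : Matrix m m ℝ)) p
      = (U : Matrix m m ℝ) * aeval D p * star (U : Matrix m m ℝ) := by
  induction p using Polynomial.induction_on' with
  | add p q hp hq => simp [hp, hq, Matrix.mul_add, Matrix.add_mul]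
  | monomial j c =>
    simp only [aeval_monomial, Algebra.algebraMap_eq_smul_one, smul_mul_assoc, one_mul,
      Matrix.mul_smul, Matrix.smul_mul]
    congr 1
    induction j with
    | zero =>
      simpa using (Matrix.mem_unitaryGroup_iff.mp U.2)
    | succ j ih =>
      rw [pow_succ, pow_succ, ← Matrix.mul_assoc, ih]
      have h1 : star (U : Matrix m m ℝ) * (U : Matrix m m ℝ) = 1 :=
        Matrix.mem_unitaryGroup_iff'.mp U.2
      calc (U : Matrix m m ℝ) * D ^ j * star (U : Matrix m m ℝ) *
            ((U : Matrix m m ℝ) * D) * star (U : Matrix m m ℝ)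
          = (U : Matrix m m ℝ) * D ^ j * ((star (U : Matrix m m ℝ) * (U : Matrix m m ℝ)) * D) *
            star (U : Matrix m m ℝ) := by simp only [Matrix.mul_assoc]
        _ = (U : Matrix m m ℝ) * (D ^ j * D) * star (U : Matrix m m ℝ) := by
            rw [h1]; simp only [Matrix.one_mul, Matrix.mul_assoc]

lemma sqrt_eq_aeval {S : Matrix m m ℝ} (hS : S.PosSemidef) (p : ℝ[X])
    (hp : ∀ i, p.eval (hS.1.eigenvalues i) = Real.sqrt (hS.1.eigenvalues i)) :
    hS.sqrt = aeval S p := by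
  conv_rhs => rw [Matrix.PosSemidef.spectral_theorem' hS.1]
  rw [aeval_unitary_conj, aeval_diagonal, Matrix.PosSemidef.sqrt]
  congr 2
  funext i
  simp [Matrix.diagonal, hp]

lemma trace_sqrt_eq_sum {S : Matrix m m ℝ} (hS : S.PosSemidef) :
    trace hS.sqrt = ∑ i, Real.sqrt (hS.1.eigenvalues i) := by
  rw [Matrix.PosSemidef.sqrt, Matrix.trace_mul_cycle]
  have h1 : (star hS.1.eigenvectorUnitary : Matrix m m ℝ) *
      (hS.1.eigenvectorUnitary : Matrix m m ℝ) = 1 := by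
    simpa using (Matrix.mem_unitaryGroup_iff'.mp hS.1.eigenvectorUnitary.2)
  rw [h1, Matrix.one_mul, Matrix.trace_diagonal]
  simp

lemma trace_sqrt_comm (R : Matrix m k ℝ) (h1 : (Rᵀ * R).PosSemidef)
    (h2 : (R * Rᵀ).PosSemidef) : trace h1.sqrt = trace h2.sqrt := by
  classical
  set s : Finset ℝ := ((Finset.univ.image h1.1.eigenvalues) ∪
    (Finset.univ.image h2.1.eigenvalues)) ∪ {0} with hs
  set p : Polynomial ℝ := Lagrange.interpolate s id Real.sqrt with hpdef
  have hinj : Set.InjOn (id : ℝ → ℝ) s := Function.injective_id.injOn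
  have hp : ∀ x ∈ s, p.eval x = Real.sqrt x := fun x hx => by
    simpa [hpdef] using Lagrange.eval_interpolate_at_node Real.sqrt hinj hx
  have h0 : (0:ℝ) ∈ s := by simp [hs]
  have hXdvd : Polynomial.X ∣ p := by
    rw [Polynomial.X_dvd_iff, Polynomial.coeff_zero_eq_eval_zero, hp 0 h0, Real.sqrt_zero]
  obtain ⟨q, hq⟩ := hXdvd
  have e1 : h1.sqrt = Polynomial.aeval (Rᵀ * R) p :=
    sqrt_eq_aeval h1 p fun i => hp _ (by simp [hs])
  have e2 : h2.sqrt = Polynomial.aeval (R * Rᵀ) p :=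
    sqrt_eq_aeval h2 p fun i => hp _ (by simp [hs])
  rw [e1, e2, hq, trace_aeval_comm]

lemma trace_le_trace_sqrt (M : Matrix m m ℝ) (hS : (Mᵀ * M).PosSemidef) :
    trace M ≤ trace hS.sqrt := by
  classical
  have hH := hS.1
  set Q : Matrix m m ℝ := (hH.eigenvectorUnitary : Matrix m m ℝ) with hQ
  have hQ2 : Q * star Q = 1 := Matrix.mem_unitaryGroup_iff.mp hH.eigenvectorUnitary.2
  set v : m → m → ℝ := fun i => ⇑(hH.eigenvectorBasis i) with hv
  -- trace M as sum over eigenbasis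
  have htr : trace M = ∑ i, v i ⬝ᵥ (M *ᵥ v i) := by
    have : trace M = trace (star Q * M * Q) := by
      rw [Matrix.trace_mul_cycle, hQ2, Matrix.one_mul]
    rw [this, Matrix.trace]
    apply Finset.sum_congr rfl
    intro i _
    simp only [Matrix.diag_apply, Matrix.mul_apply, dotProduct, Matrix.mulVec,
      dotProduct, Finset.sum_mul, Finset.mul_sum]
    rw [Finset.sum_comm]
    apply Finset.sum_congr rfl
    intro a _
    apply Finset.sum_congr rfl
    intro b _
    simp [hv, hQ, Matrix.star_apply]
    ring
  rw [htr, trace_sqrt_eq_sum]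
  apply Finset.sum_le_sum
  intro i _
  have hvv : v i ⬝ᵥ v i = 1 := by
    have := hH.eigenvectorBasis.orthonormal.1 i
    have h2 : (inner ℝ (hH.eigenvectorBasis i) (hH.eigenvectorBasis i) : ℝ) = 1 := by
      rw [real_inner_self_eq_norm_sq]
      simp [this]
    rw [PiLp.inner_apply] at h2
    simpa [dotProduct, mul_comm, hv, pow_two] using h2
  have hMv : (M *ᵥ v i) ⬝ᵥ (M *ᵥ v i) = hH.eigenvalues i := by
    have hS' : (Mᵀ * M) *ᵥ v i = hH.eigenvalues i • v i := hH.mulVec_eigenvectorBasis i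
    calc (M *ᵥ v i) ⬝ᵥ (M *ᵥ v i) = v i ⬝ᵥ ((Mᵀ * M) *ᵥ v i) := by
          rw [← Matrix.mulVec_mulVec, Matrix.dotProduct_mulVec (v i),
            ← Matrix.mulVec_transpose, dotProduct_comm, Matrix.transpose_transpose]
      _ = hH.eigenvalues i := by rw [hS', dotProduct_smul, smul_eq_mul, hvv, mul_one]
  have hcs : (v i ⬝ᵥ (M *ᵥ v i)) ^ 2 ≤ (v i ⬝ᵥ v i) * ((M *ᵥ v i) ⬝ᵥ (M *ᵥ v i)) := by
    simpa [dotProduct, pow_two] using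
      Finset.sum_mul_sq_le_sq_mul_sq Finset.univ (v i) (M *ᵥ v i)
  rw [hvv, one_mul, hMv] at hcs
  calc v i ⬝ᵥ (M *ᵥ v i) ≤ |v i ⬝ᵥ (M *ᵥ v i)| := le_abs_self _
    _ = Real.sqrt ((v i ⬝ᵥ (M *ᵥ v i)) ^ 2) := (Real.sqrt_sq_eq_abs _).symm
    _ ≤ Real.sqrt (hH.eigenvalues i) := Real.sqrt_le_sqrt hcs

lemma psdSqrt_eq {n : ℕ} {A : Matrix (Fin n) (Fin n) ℝ} (hA : A.PosSemidef) :
    psdSqrt A = hA.sqrt := by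
  rw [psdSqrt, dif_pos hA]
  rfl

lemma psd_tmul (R : Matrix m k ℝ) : (Rᵀ * R).PosSemidef := by
  have := Matrix.posSemidef_conjTranspose_mul_self R
  rwa [Matrix.conjTranspose_eq_transpose_of_trivial] at this

lemma psd_mult (R : Matrix m k ℝ) : (R * Rᵀ).PosSemidef := by
  have := Matrix.posSemidef_self_mul_conjTranspose R
  rwa [Matrix.conjTranspose_eq_transpose_of_trivial] at this

lemma trace_sqrt_congr {S T : Matrix m m ℝ} (hS : S.PosSemidef) (hT : T.PosSemidef)
    (h : S = T) : trace hS.sqrt = trace hT.sqrt := by subst h; rfl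

lemma cross_bound {n : ℕ} (A B C : Matrix (Fin n) (Fin n) ℝ)
    (hM : (Matrix.fromBlocks A C Cᵀ B).PosSemidef) :
    trace C ≤ trace (psdSqrt (psdSqrt A * B * psdSqrt A)) := by
  classical
  set M := Matrix.fromBlocks A C Cᵀ B with hMdef
  have hA : A.PosSemidef := by
    have h := hM.submatrix Sum.inl
    have : M.submatrix Sum.inl Sum.inl = A := by ext i j; rfl
    rwa [this] at h
  have hB : B.PosSemidef := by
    have h := hM.submatrix Sum.inr
    have : M.submatrix Sum.inr Sum.inr = B := by ext i j; rfl
    rwa [this] at h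
  set N := hM.sqrt with hNdef
  have hN : N.PosSemidef := hM.posSemidef_sqrt
  have hNs : ∀ a b, N a b = N b a := by
    intro a b
    have h := hN.1
    conv_lhs => rw [← h]
    simp [Matrix.conjTranspose_apply]
  have hNN : N * N = M := hM.sqrt_mul_self
  set U : Matrix (Fin n) (Fin n ⊕ Fin n) ℝ := N.submatrix Sum.inl id with hUdef
  set V : Matrix (Fin n) (Fin n ⊕ Fin n) ℝ := N.submatrix Sum.inr id with hVdef
  have key : ∀ a b, (∑ x, N a x * N b x) = M a b := by
    intro a b
    rw [← hNN, Matrix.mul_apply]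
    exact Finset.sum_congr rfl fun x _ => by rw [hNs x b]
  have hUU : U * Uᵀ = A := by
    ext i j
    simpa [Matrix.mul_apply, hUdef, hMdef] using key (Sum.inl i) (Sum.inl j)
  have hUV : U * Vᵀ = C := by
    ext i j
    simpa [Matrix.mul_apply, hUdef, hVdef, hMdef] using key (Sum.inl i) (Sum.inr j)
  have hVV : V * Vᵀ = B := by
    ext i j
    simpa [Matrix.mul_apply, hVdef, hMdef] using key (Sum.inr i) (Sum.inr j)
  set P := psdSqrt A with hPdef
  set QB := psdSqrt B with hQBdef
  have hPP : P * P = A := by rw [hPdef, psdSqrt_eq hA]; exact hA.sqrt_mul_self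
  have hQQ : QB * QB = B := by rw [hQBdef, psdSqrt_eq hB]; exact hB.sqrt_mul_self
  have hPsym : Pᵀ = P := by
    rw [hPdef, psdSqrt_eq hA, ← Matrix.conjTranspose_eq_transpose_of_trivial]
    exact hA.posSemidef_sqrt.1
  have hQsym : QBᵀ = QB := by
    rw [hQBdef, psdSqrt_eq hB, ← Matrix.conjTranspose_eq_transpose_of_trivial]
    exact hB.posSemidef_sqrt.1
  -- W = Vᵀ * U
  set W : Matrix (Fin n ⊕ Fin n) (Fin n ⊕ Fin n) ℝ := Vᵀ * U with hWdef
  have htrCW : trace C = trace W := by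
    rw [← hUV, Matrix.trace_mul_comm]
  have hWW : Wᵀ * W = (QB * U)ᵀ * (QB * U) := by
    rw [hWdef, Matrix.transpose_mul, Matrix.transpose_transpose, Matrix.transpose_mul, hQsym]
    calc Uᵀ * V * (Vᵀ * U) = Uᵀ * (V * Vᵀ) * U := by simp only [Matrix.mul_assoc]
      _ = Uᵀ * QB * (QB * U) := by rw [hVV, ← hQQ]; simp only [Matrix.mul_assoc]
  have h1 : (Wᵀ * W).PosSemidef := psd_tmul W
  have h1' : ((QB * U)ᵀ * (QB * U)).PosSemidef := psd_tmul _
  have h2' : ((QB * U) * (QB * U)ᵀ).PosSemidef := psd_mult _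
  have h3 : ((QB * P) * (QB * P)ᵀ).PosSemidef := psd_mult _
  have h4 : ((QB * P)ᵀ * (QB * P)).PosSemidef := psd_tmul _
  have hfin : (psdSqrt A * B * psdSqrt A).PosSemidef := by
    have : psdSqrt A * B * psdSqrt A = (QB * P)ᵀ * (QB * P) := by
      rw [Matrix.transpose_mul, hPsym, hQsym, ← hQQ]
      simp only [Matrix.mul_assoc, hPdef]
    rw [this]; exact h4
  calc trace C = trace W := htrCW
    _ ≤ trace h1.sqrt := trace_le_trace_sqrt W h1
    _ = trace h1'.sqrt := trace_sqrt_congr h1 h1' hWW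
    _ = trace h2'.sqrt := trace_sqrt_comm (QB * U) h1' h2'
    _ = trace h3.sqrt := by
        apply trace_sqrt_congr
        rw [Matrix.transpose_mul, hQsym, Matrix.transpose_mul, hPsym, hQsym]
        calc QB * U * (Uᵀ * QB) = QB * (U * Uᵀ) * QB := by simp only [Matrix.mul_assoc]
          _ = QB * P * (P * QB) := by rw [hUU, ← hPP]; simp only [Matrix.mul_assoc]
    _ = trace h4.sqrt := (trace_sqrt_comm (QB * P) h4 h3).symm
    _ = trace (psdSqrt (psdSqrt A * B * psdSqrt A)) := by
        rw [psdSqrt_eq hfin]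
        apply trace_sqrt_congr
        rw [Matrix.transpose_mul, hPsym, hQsym, ← hQQ]
        simp only [Matrix.mul_assoc, hPdef]

section Prob
open MeasureTheory
variable {Ω : Type*} [MeasurableSpace Ω] {ℙ : Measure Ω} [IsProbabilityMeasure ℙ]

lemma mul_int {f g : Ω → ℝ} (hf : MemLp f 2 ℙ) (hg : MemLp g 2 ℙ) :
    Integrable (fun ω => f ω * g ω) ℙ := by
  have h := hf.smul hg (p := 2) (q := 2) (r := 1)
    (hpqr := ⟨by simp [ENNReal.inv_two_add_inv_two]⟩)
  have : (g • f) = fun ω => f ω * g ω := by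
    funext ω; simp [Pi.smul_apply, smul_eq_mul, mul_comm]
  rw [this] at h
  exact memLp_one_iff_integrable.mp h

lemma dim1 {f g : Ω → ℝ} (hf : MemLp f 2 ℙ) (hg : MemLp g 2 ℙ) :
    ∫ ω, (f ω - g ω) ^ 2 ∂ℙ
      = ((∫ ω, f ω ∂ℙ) - ∫ ω, g ω ∂ℙ) ^ 2
        + (∫ ω, (f ω - ∫ ω', f ω' ∂ℙ) * (f ω - ∫ ω', f ω' ∂ℙ) ∂ℙ)
        + (∫ ω, (g ω - ∫ ω', g ω' ∂ℙ) * (g ω - ∫ ω', g ω' ∂ℙ) ∂ℙ)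
        - 2 * ∫ ω, (f ω - ∫ ω', f ω' ∂ℙ) * (g ω - ∫ ω', g ω' ∂ℙ) ∂ℙ := by
  set a := ∫ ω, f ω ∂ℙ with ha
  set b := ∫ ω, g ω ∂ℙ with hb
  set F : Ω → ℝ := fun ω => f ω - a with hF
  set G : Ω → ℝ := fun ω => g ω - b with hG
  have hFm : MemLp F 2 ℙ := hf.sub (memLp_const a)
  have hGm : MemLp G 2 ℙ := hg.sub (memLp_const b)
  have hFint : Integrable F ℙ := hFm.integrable one_le_two
  have hGint : Integrable G ℙ := hGm.integrable one_le_two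
  have hfint : Integrable f ℙ := hf.integrable one_le_two
  have hgint : Integrable g ℙ := hg.integrable one_le_two
  have hFzero : ∫ ω, F ω ∂ℙ = 0 := by
    rw [hF]
    rw [integral_sub hfint (integrable_const a), integral_const]
    simp [ha]
  have hGzero : ∫ ω, G ω ∂ℙ = 0 := by
    rw [hG]
    rw [integral_sub hgint (integrable_const b), integral_const]
    simp [hb]
  have hFF := mul_int hFm hFm
  have hGG := mul_int hGm hGm
  have hFG := mul_int hFm hGm
  have expand : (fun ω => (f ω - g ω) ^ 2)
      = fun ω => (F ω * F ω + G ω * G ω - 2 * (F ω * G ω))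
        + ((2 * (a - b)) * F ω - (2 * (a - b)) * G ω) + (a - b) ^ 2 := by
    funext ω; simp only [hF, hG]; ring
  have I1 : Integrable (fun ω => F ω * F ω + G ω * G ω - 2 * (F ω * G ω)) ℙ :=
    (hFF.add hGG).sub (hFG.const_mul 2)
  have I2 : Integrable (fun ω => (2 * (a - b)) * F ω - (2 * (a - b)) * G ω) ℙ :=
    (hFint.const_mul _).sub (hGint.const_mul _)
  have I12 : Integrable (fun ω => (F ω * F ω + G ω * G ω - 2 * (F ω * G ω))
      + ((2 * (a - b)) * F ω - (2 * (a - b)) * G ω)) ℙ := I1.add I2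
  have J1 : Integrable (fun ω => F ω * F ω + G ω * G ω) ℙ := hFF.add hGG
  have J2 : Integrable (fun ω => 2 * (F ω * G ω)) ℙ := hFG.const_mul 2
  have J3 : Integrable (fun ω => (2 * (a - b)) * F ω) ℙ := hFint.const_mul _
  have J4 : Integrable (fun ω => (2 * (a - b)) * G ω) ℙ := hGint.const_mul _
  rw [show (∫ ω, (f ω - g ω) ^ 2 ∂ℙ)
      = ∫ ω, ((F ω * F ω + G ω * G ω - 2 * (F ω * G ω))
        + ((2 * (a - b)) * F ω - (2 * (a - b)) * G ω) + (a - b) ^ 2) ∂ℙ from by rw [expand]]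
  rw [integral_add I12 (integrable_const _), integral_add I1 I2,
    integral_sub J1 J2, integral_add hFF hGG,
    integral_sub J3 J4,
    integral_const_mul, integral_const_mul, integral_const_mul,
    hFzero, hGzero, integral_const]
  simp only [probReal_univ, one_smul, smul_eq_mul, hF, hG]
  ring

lemma coord_memLp {n : ℕ} {X : Ω → EuclideanSpace ℝ (Fin n)} (hX : MemLp X 2 ℙ) (i : Fin n) :
    MemLp (fun ω => X ω i) 2 ℙ := by
  have h := (EuclideanSpace.proj i (𝕜 := ℝ)).comp_memLp' hX
  exact h

lemma integral_coord {n : ℕ} {X : Ω → EuclideanSpace ℝ (Fin n)} (hX : MemLp X 2 ℙ) (i : Fin n) :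
    (∫ ω, X ω ∂ℙ) i = ∫ ω, X ω i ∂ℙ := by
  have hInt : Integrable X ℙ := hX.integrable one_le_two
  have h := (EuclideanSpace.proj i (𝕜 := ℝ)).integral_comp_comm hInt
  simpa using h.symm

lemma norm_sq_eq {n : ℕ} (z : EuclideanSpace ℝ (Fin n)) : ‖z‖ ^ 2 = ∑ i, (z i) ^ 2 := by
  rw [EuclideanSpace.norm_eq, Real.sq_sqrt]
  · simp [sq_abs]
  · positivity

end Prob

section Prob2
open MeasureTheory
variable {Ω : Type*} [MeasurableSpace Ω] {ℙ : Measure Ω} [IsProbabilityMeasure ℙ]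

lemma gram_psd {ι : Type*} [Fintype ι] [DecidableEq ι] {w : ι → Ω → ℝ}
    (hw : ∀ p, MemLp (w p) 2 ℙ) (M : Matrix ι ι ℝ)
    (hM : ∀ p q, M p q = ∫ ω, w p ω * w q ω ∂ℙ) : M.PosSemidef := by
  refine Matrix.PosSemidef.of_dotProduct_mulVec_nonneg ?_ ?_
  · ext p q
    rw [Matrix.conjTranspose_apply, star_trivial, hM, hM]
    exact integral_congr_ae (Filter.Eventually.of_forall fun ω => mul_comm _ _)
  · intro z
    set h : Ω → ℝ := fun ω => ∑ p, z p * w p ω with hh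
    have hint : ∀ p q : ι, Integrable (fun ω => (z p * z q) * (w p ω * w q ω)) ℙ :=
      fun p q => (mul_int (hw p) (hw q)).const_mul _
    have hexp : (fun ω => h ω * h ω)
        = fun ω => ∑ p, ∑ q, (z p * z q) * (w p ω * w q ω) := by
      funext ω
      rw [hh, Finset.sum_mul_sum]
      exact Finset.sum_congr rfl fun p _ => Finset.sum_congr rfl fun q _ => by ring
    have key : ∫ ω, h ω * h ω ∂ℙ = ∑ p, ∑ q, (z p * z q) * ∫ ω, w p ω * w q ω ∂ℙ := by
      rw [show (∫ ω, h ω * h ω ∂ℙ) = ∫ ω, ∑ p, ∑ q, (z p * z q) * (w p ω * w q ω) ∂ℙ from by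
        rw [hexp]]
      rw [integral_finset_sum Finset.univ fun p _ =>
        integrable_finset_sum Finset.univ fun q _ => hint p q]
      refine Finset.sum_congr rfl fun p _ => ?_
      rw [integral_finset_sum Finset.univ fun q _ => hint p q]
      exact Finset.sum_congr rfl fun q _ => integral_const_mul _ _
    have hzMz : dotProduct (star z) (M *ᵥ z)
        = ∑ p, ∑ q, (z p * z q) * ∫ ω, w p ω * w q ω ∂ℙ := by
      simp only [star_trivial, dotProduct, Matrix.mulVec, dotProduct,
        Finset.mul_sum]
      refine Finset.sum_congr rfl fun p _ => Finset.sum_congr rfl fun q _ => ?_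
      rw [hM]; ring
    rw [hzMz, ← key]
    exact integral_nonneg fun ω => mul_self_nonneg _

end Prob2

end GelbrichAux

open GelbrichAux

/-- Dowson–Landau / Gelbrich lower bound. For square-integrable random
vectors `X Y : Ω → ℝⁿ` with means `m_X, m_Y` and covariance matrices `Σ_X, Σ_Y`,
`𝔼‖X − Y‖² ≥ ‖m_X − m_Y‖² + tr Σ_X + tr Σ_Y − 2 tr((Σ_X^{1/2} Σ_Y Σ_X^{1/2})^{1/2})`. -/
theorem stmt_2 {Ω : Type*} [MeasurableSpace Ω] (ℙ : Measure Ω) [IsProbabilityMeasure ℙ]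
    {n : ℕ} (X Y : Ω → EuclideanSpace ℝ (Fin n))
    (hX : MemLp X 2 ℙ) (hY : MemLp Y 2 ℙ) :
    ∫ ω, ‖X ω - Y ω‖ ^ 2 ∂ℙ ≥
      ‖(∫ ω, X ω ∂ℙ) - (∫ ω, Y ω ∂ℙ)‖ ^ 2 +
        (covMatrix ℙ X).trace + (covMatrix ℙ Y).trace -
          2 * (psdSqrt (psdSqrt (covMatrix ℙ X) * covMatrix ℙ Y *
            psdSqrt (covMatrix ℙ X))).trace := by
  classical
  have hXi : ∀ i, MemLp (fun ω => X ω i) 2 ℙ := fun i => coord_memLp hX i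
  have hYi : ∀ i, MemLp (fun ω => Y ω i) 2 ℙ := fun i => coord_memLp hY i
  set A := covMatrix ℙ X with hA
  set B := covMatrix ℙ Y with hB
  set C : Matrix (Fin n) (Fin n) ℝ := Matrix.of (fun i j =>
    ∫ ω, (X ω i - ∫ ω', X ω' i ∂ℙ) * (Y ω j - ∫ ω', Y ω' j ∂ℙ) ∂ℙ) with hC
  -- integral of squared norm splits into coordinates
  have hsq : ∀ i : Fin n, Integrable (fun ω => (X ω i - Y ω i) ^ 2) ℙ := by
    intro i
    have := mul_int ((hXi i).sub (hYi i)) ((hXi i).sub (hYi i))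
    simpa [pow_two] using this
  have hnormint : ∫ ω, ‖X ω - Y ω‖ ^ 2 ∂ℙ = ∑ i, ∫ ω, (X ω i - Y ω i) ^ 2 ∂ℙ := by
    rw [show (fun ω => ‖X ω - Y ω‖ ^ 2) = fun ω => ∑ i, (X ω i - Y ω i) ^ 2 from
      funext fun ω => by rw [norm_sq_eq]; exact Finset.sum_congr rfl fun i _ => by simp]
    exact integral_finset_sum _ fun i _ => hsq i
  have key : ∀ i, ∫ ω, (X ω i - Y ω i) ^ 2 ∂ℙ
      = ((∫ ω, X ω i ∂ℙ) - ∫ ω, Y ω i ∂ℙ) ^ 2 + A i i + B i i - 2 * C i i := by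
    intro i
    have h := dim1 (hXi i) (hYi i)
    rw [h, hA, hB, hC]
    simp only [covMatrix, Matrix.of_apply]
  have hsum : ∫ ω, ‖X ω - Y ω‖ ^ 2 ∂ℙ
      = (∑ i, ((∫ ω, X ω i ∂ℙ) - ∫ ω, Y ω i ∂ℙ) ^ 2) + A.trace + B.trace - 2 * C.trace := by
    rw [hnormint, Finset.sum_congr rfl fun i _ => key i, Matrix.trace, Matrix.trace,
      Matrix.trace]
    simp only [Matrix.diag_apply, Finset.sum_sub_distrib, Finset.sum_add_distrib,
      Finset.mul_sum]
  have hmean : ‖(∫ ω, X ω ∂ℙ) - (∫ ω, Y ω ∂ℙ)‖ ^ 2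
      = ∑ i, ((∫ ω, X ω i ∂ℙ) - ∫ ω, Y ω i ∂ℙ) ^ 2 := by
    rw [norm_sq_eq]
    refine Finset.sum_congr rfl fun i _ => ?_
    rw [show ((∫ ω, X ω ∂ℙ) - (∫ ω, Y ω ∂ℙ)) i = (∫ ω, X ω ∂ℙ) i - (∫ ω, Y ω ∂ℙ) i from by simp,
      integral_coord hX, integral_coord hY]
  -- the Gram block matrix is PSD
  set w : (Fin n ⊕ Fin n) → Ω → ℝ := Sum.elim
    (fun i ω => X ω i - ∫ ω', X ω' i ∂ℙ) (fun j ω => Y ω j - ∫ ω', Y ω' j ∂ℙ) with hw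
  have hwLp : ∀ p, MemLp (w p) 2 ℙ := by
    rintro (i | j)
    · exact (hXi i).sub (memLp_const _)
    · exact (hYi j).sub (memLp_const _)
  have hM : (Matrix.fromBlocks A C Cᵀ B).PosSemidef := by
    apply gram_psd hwLp
    rintro (i | i) (j | j)
    · simp [hA, covMatrix, hw, Matrix.fromBlocks]
    · simp [hC, hw, Matrix.fromBlocks]
    · simp only [Matrix.fromBlocks_apply₂₁, Matrix.transpose_apply, hC, Matrix.of_apply, hw,
        Sum.elim_inl, Sum.elim_inr]
      exact integral_congr_ae (Filter.Eventually.of_forall fun ω => mul_comm _ _)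
    · simp [hB, covMatrix, hw, Matrix.fromBlocks]
  have hcross := cross_bound A B C hM
  rw [hsum, hmean, ge_iff_le]
  linarith
end

section
/- Let X = (X_1, X_2) be a square-integrable random vector on a probability space (Ω, ℙ) with values in ℝ², having zero mean, and set a = 𝔼[X_1²], b = 𝔼[X_2²], c = 𝔼[X_1 X_2]. For θ, φ ∈ ℝ let Σ_{R_θ X} and Σ_{R_φ X} be the covariance matrices of R_θ X and R_φ X, and let M := Σ_{R_θ X}·Σ_{R_φ X}. Then: tr(M) = ½·((a+b)² + ((a−b)² + 4c²)·cos(2(θ−φ))), det(M) = (ab − c²)², and tr(M) + 2√(det M) = ((a−b)² + 4c²)·cos²(θ−φ) + 4(ab − c²). Consequently tr((Σ_{R_θ X} Σ_{R_φ X})^{1/2}) = √(((a−b)² + 4c²)·cos²(θ−φ) + 4(ab − c²)). -/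
open MeasureTheory Matrix Real

/-- The 2×2 rotation matrix by angle `θ`. -/
noncomputable def rot (θ : ℝ) : Matrix (Fin 2) (Fin 2) ℝ :=
  !![Real.cos θ, -Real.sin θ; Real.sin θ, Real.cos θ]

/-- For a square-integrable zero-mean random vector `X` in `ℝ²` with
`a = 𝔼[X₁²]`, `b = 𝔼[X₂²]`, `c = 𝔼[X₁X₂]`, and `M := Σ_{R_θ X}·Σ_{R_φ X}`, one has
`tr M = ½((a+b)² + ((a−b)² + 4c²)cos(2(θ−φ)))`, `det M = (ab − c²)²`,
`tr M + 2√(det M) = ((a−b)² + 4c²)cos²(θ−φ) + 4(ab − c²)`, and consequently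
`tr((Σ_{R_θ X}Σ_{R_φ X})^{1/2}) = √(tr M + 2√(det M)) = √(((a−b)² + 4c²)cos²(θ−φ) + 4(ab − c²))`
(here the trace of the 2×2 matrix square root is `√(tr M + 2√(det M))`, cf. Statement 8). -/
theorem stmt_9 {Ω : Type*} [MeasurableSpace Ω] (ℙ : Measure Ω) [IsProbabilityMeasure ℙ]
    (X : Ω → EuclideanSpace ℝ (Fin 2)) (hX : MemLp X 2 ℙ)
    (hmean : (∫ ω, X ω ∂ℙ) = 0)
    (a b c : ℝ)
    (ha : a = ∫ ω, (X ω 0) ^ 2 ∂ℙ) (hb : b = ∫ ω, (X ω 1) ^ 2 ∂ℙ)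
    (hc : c = ∫ ω, X ω 0 * X ω 1 ∂ℙ)
    (θ φ : ℝ)
    (M : Matrix (Fin 2) (Fin 2) ℝ)
    (hM : M = covMatrix ℙ (fun ω => (WithLp.toLp 2 ((rot θ).mulVec (X ω)) : EuclideanSpace ℝ (Fin 2))) *
        covMatrix ℙ (fun ω => (WithLp.toLp 2 ((rot φ).mulVec (X ω)) : EuclideanSpace ℝ (Fin 2)))) :
    M.trace = (1 / 2) * ((a + b) ^ 2 + ((a - b) ^ 2 + 4 * c ^ 2) * Real.cos (2 * (θ - φ))) ∧
      M.det = (a * b - c ^ 2) ^ 2 ∧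
      M.trace + 2 * Real.sqrt M.det =
        ((a - b) ^ 2 + 4 * c ^ 2) * Real.cos (θ - φ) ^ 2 + 4 * (a * b - c ^ 2) ∧
      Real.sqrt (M.trace + 2 * Real.sqrt M.det) =
        Real.sqrt (((a - b) ^ 2 + 4 * c ^ 2) * Real.cos (θ - φ) ^ 2 + 4 * (a * b - c ^ 2)) := by
  -- component integrability and zero means
  have h0 : MemLp (fun ω => X ω 0) 2 ℙ :=
    (EuclideanSpace.proj (0 : Fin 2) : EuclideanSpace ℝ (Fin 2) →L[ℝ] ℝ).comp_memLp' hX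
  have h1 : MemLp (fun ω => X ω 1) 2 ℙ :=
    (EuclideanSpace.proj (1 : Fin 2) : EuclideanSpace ℝ (Fin 2) →L[ℝ] ℝ).comp_memLp' hX
  have hi0 : Integrable (fun ω => X ω 0) ℙ := h0.integrable one_le_two
  have hi1 : Integrable (fun ω => X ω 1) ℙ := h1.integrable one_le_two
  have hint : Integrable X ℙ := hX.integrable one_le_two
  have m0 : ∫ ω, X ω 0 ∂ℙ = 0 := by
    have := (EuclideanSpace.proj (0 : Fin 2) :
      EuclideanSpace ℝ (Fin 2) →L[ℝ] ℝ).integral_comp_comm hint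
    simpa [hmean] using this
  have m1 : ∫ ω, X ω 1 ∂ℙ = 0 := by
    have := (EuclideanSpace.proj (1 : Fin 2) :
      EuclideanSpace ℝ (Fin 2) →L[ℝ] ℝ).integral_comp_comm hint
    simpa [hmean] using this
  have hone : (1 : ENNReal) / 1 = 1 / 2 + 1 / 2 := by
    simp [one_div, ENNReal.inv_two_add_inv_two]
  have pmul : ∀ (f g : Ω → ℝ), MemLp f 2 ℙ → MemLp g 2 ℙ →
      Integrable (fun ω => f ω * g ω) ℙ := by
    intro f g hf hg
    have := (hf.smul hg (p := 2) (q := 2) (r := 1)).integrable le_rfl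
    simpa [smul_eq_mul, mul_comm, Pi.mul_def] using this
  have p00 : Integrable (fun ω => X ω 0 * X ω 0) ℙ := pmul _ _ h0 h0
  have p01 : Integrable (fun ω => X ω 0 * X ω 1) ℙ := pmul _ _ h0 h1
  have p11 : Integrable (fun ω => X ω 1 * X ω 1) ℙ := pmul _ _ h1 h1
  -- key bilinear integral computation
  have key : ∀ c0 c1 d0 d1 : ℝ,
      ∫ ω, (c0 * X ω 0 + c1 * X ω 1) * (d0 * X ω 0 + d1 * X ω 1) ∂ℙ
        = c0 * d0 * a + (c0 * d1 + c1 * d0) * c + c1 * d1 * b := by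
    intro c0 c1 d0 d1
    have hfun : (fun ω => (c0 * X ω 0 + c1 * X ω 1) * (d0 * X ω 0 + d1 * X ω 1))
        = fun ω => c0 * d0 * (X ω 0 * X ω 0) +
            ((c0 * d1 + c1 * d0) * (X ω 0 * X ω 1) + c1 * d1 * (X ω 1 * X ω 1)) := by
      funext ω; ring
    have hg : Integrable (fun ω => (c0 * d1 + c1 * d0) * (X ω 0 * X ω 1)
        + c1 * d1 * (X ω 1 * X ω 1)) ℙ := (p01.const_mul _).add (p11.const_mul _)
    rw [hfun, integral_add (p00.const_mul _) hg,
      integral_add (p01.const_mul _) (p11.const_mul _),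
      integral_const_mul, integral_const_mul, integral_const_mul]
    have ea : ∫ ω, X ω 0 * X ω 0 ∂ℙ = a := by rw [ha]; congr 1; funext ω; ring
    have eb : ∫ ω, X ω 1 * X ω 1 ∂ℙ = b := by rw [hb]; congr 1; funext ω; ring
    rw [ea, eb, ← hc]; ring
  -- the covariance matrix of a rotated vector, entrywise
  have covE : ∀ ψ : ℝ, ∀ i j : Fin 2,
      covMatrix ℙ (fun ω => (WithLp.toLp 2 ((rot ψ).mulVec (X ω)) : EuclideanSpace ℝ (Fin 2))) i j
        = rot ψ i 0 * rot ψ j 0 * a + (rot ψ i 0 * rot ψ j 1 + rot ψ i 1 * rot ψ j 0) * c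
            + rot ψ i 1 * rot ψ j 1 * b := by
    intro ψ i j
    have mv : ∀ (v : EuclideanSpace ℝ (Fin 2)) (k : Fin 2),
        (WithLp.toLp 2 ((rot ψ).mulVec v) : EuclideanSpace ℝ (Fin 2)) k
          = rot ψ k 0 * v 0 + rot ψ k 1 * v 1 := by
      intro v k
      simp [Matrix.mulVec, dotProduct, Fin.sum_univ_two]
    have mean0 : ∀ k : Fin 2,
        ∫ ω, (rot ψ k 0 * X ω 0 + rot ψ k 1 * X ω 1) ∂ℙ = 0 := by
      intro k
      rw [integral_add (hi0.const_mul _) (hi1.const_mul _),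
        integral_const_mul, integral_const_mul, m0, m1]
      ring
    show (∫ ω, ((WithLp.toLp 2 ((rot ψ).mulVec (X ω)) : EuclideanSpace ℝ (Fin 2)) i -
        ∫ ω', (WithLp.toLp 2 ((rot ψ).mulVec (X ω')) : EuclideanSpace ℝ (Fin 2)) i ∂ℙ) *
        ((WithLp.toLp 2 ((rot ψ).mulVec (X ω)) : EuclideanSpace ℝ (Fin 2)) j -
        ∫ ω', (WithLp.toLp 2 ((rot ψ).mulVec (X ω')) : EuclideanSpace ℝ (Fin 2)) j ∂ℙ) ∂ℙ) = _
    simp only [WithLp.ofLp_toLp, Matrix.mulVec, dotProduct, Fin.sum_univ_two, mean0, sub_zero]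
    exact key _ _ _ _
  have hθ : Real.sin θ ^ 2 + Real.cos θ ^ 2 = 1 := Real.sin_sq_add_cos_sq θ
  have hφ : Real.sin φ ^ 2 + Real.cos φ ^ 2 = 1 := Real.sin_sq_add_cos_sq φ
  -- Cauchy–Schwarz : c² ≤ ab
  have hCS : c ^ 2 ≤ a * b := by
    have hquad : ∀ t : ℝ, 0 ≤ a * (t * t) + (2 * c) * t + b := by
      intro t
      have h := key t 1 t 1
      have hnn : 0 ≤ ∫ ω, (t * X ω 0 + 1 * X ω 1) * (t * X ω 0 + 1 * X ω 1) ∂ℙ :=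
        integral_nonneg fun ω => mul_self_nonneg _
      nlinarith [h, hnn]
    have := discrim_le_zero hquad
    rw [discrim] at this
    nlinarith [this]
  -- trace
  have htrace : M.trace =
      (1 / 2) * ((a + b) ^ 2 + ((a - b) ^ 2 + 4 * c ^ 2) * Real.cos (2 * (θ - φ))) := by
    rw [hM, Matrix.trace_fin_two]
    simp only [Matrix.mul_apply, Fin.sum_univ_two, covE]
    rw [Real.cos_two_mul, Real.cos_sub]
    simp only [rot, Matrix.cons_val', Matrix.cons_val_zero, Matrix.cons_val_one,
      Matrix.head_cons, Matrix.empty_val', Matrix.cons_val_fin_one, Matrix.head_fin_const,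
      Matrix.of_apply, Matrix.cons_val_one, Matrix.head_cons]
    linear_combination (-2 * c ^ 2 * Real.cos φ ^ 2 - 2 * c ^ 2 * Real.sin φ ^ 2 + 2 * a * b) * hθ
      + (-2 * c ^ 2 + 2 * a * b * Real.cos θ ^ 2 + 2 * a * b * Real.sin θ ^ 2) * hφ
  -- determinant
  have hdetC : ∀ ψ : ℝ,
      (covMatrix ℙ (fun ω => (WithLp.toLp 2 ((rot ψ).mulVec (X ω)) : EuclideanSpace ℝ (Fin 2)))).det
        = a * b - c ^ 2 := by
    intro ψ
    have hψ : Real.sin ψ ^ 2 + Real.cos ψ ^ 2 = 1 := Real.sin_sq_add_cos_sq ψ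
    rw [Matrix.det_fin_two]
    simp only [covE]
    simp only [rot, Matrix.cons_val', Matrix.cons_val_zero, Matrix.cons_val_one,
      Matrix.head_cons, Matrix.empty_val', Matrix.cons_val_fin_one, Matrix.head_fin_const,
      Matrix.of_apply]
    linear_combination ((a * b - c ^ 2) * (1 + Real.cos ψ ^ 2 + Real.sin ψ ^ 2)) * hψ
  have hdet : M.det = (a * b - c ^ 2) ^ 2 := by
    rw [hM, Matrix.det_mul, hdetC, hdetC]; ring
  have hsqrtdet : Real.sqrt M.det = a * b - c ^ 2 := by
    rw [hdet, Real.sqrt_sq (by linarith)]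
  have h3 : M.trace + 2 * Real.sqrt M.det =
      ((a - b) ^ 2 + 4 * c ^ 2) * Real.cos (θ - φ) ^ 2 + 4 * (a * b - c ^ 2) := by
    rw [htrace, hsqrtdet, Real.cos_two_mul]; ring
  exact ⟨htrace, hdet, h3, by rw [h3]⟩
end

section
/- Let X = (X_1, X_2) be a square-integrable random vector on a probability space (Ω, ℙ) with values in ℝ². Set m_1 = 𝔼[X_1], m_2 = 𝔼[X_2], a = Var[X_1], b = Var[X_2], c = Cov(X_1, X_2). Let θ, φ ∈ ℝ, and let U, V be square-integrable random vectors on a probability space (Ω', ℙ') with values in ℝ² whose laws satisfy U_#ℙ' = (R_θ X)_#ℙ and V_#ℙ' = (R_φ X)_#ℙ. Then 𝔼‖U − V‖² ≥ 2(m_1² + m_2²)(1 − cos(θ − φ)) + 2(a + b) − 2√(((a − b)² + 4c²)·cos²(θ − φ) + 4(ab − c²)). Consequently the squared quadratic Wasserstein distance between the laws of R_θ X and R_φ X is bounded below by this quantity. -/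
open MeasureTheory Matrix Real

/- Auxiliary lemmas -/

private lemma mul_int' {α : Type*} [MeasurableSpace α] {μ : Measure α} {f g : α → ℝ}
    (hf : MemLp f 2 μ) (hg : MemLp g 2 μ) : Integrable (fun x => f x * g x) μ := by
  rw [← memLp_one_iff_integrable]
  exact (hg.smul hf :
    MemLp (f • g) 1 μ)

private theorem cs0 {α : Type*} [MeasurableSpace α] {μ : Measure α} {f g : α → ℝ}
    (hf2 : Integrable (fun x => f x ^ 2) μ) (hg2 : Integrable (fun x => g x ^ 2) μ)
    (hfg : Integrable (fun x => f x * g x) μ) :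
    ∫ x, f x * g x ∂μ ≤ Real.sqrt (∫ x, f x ^ 2 ∂μ) * Real.sqrt (∫ x, g x ^ 2 ∂μ) := by
  set A := ∫ x, f x ^ 2 ∂μ with hA
  set B := ∫ x, g x ^ 2 ∂μ with hB
  set C := ∫ x, f x * g x ∂μ with hC
  have hA0 : 0 ≤ A := integral_nonneg fun x => sq_nonneg _
  have hB0 : 0 ≤ B := integral_nonneg fun x => sq_nonneg _
  have key : ∀ t : ℝ, 0 ≤ t ^ 2 * A - 2 * t * C + B := by
    intro t
    have h1 : 0 ≤ ∫ x, (t * f x - g x) ^ 2 ∂μ := integral_nonneg fun x => sq_nonneg _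
    have i1 : Integrable (fun x => t ^ 2 * f x ^ 2 - 2 * t * (f x * g x)) μ :=
      (hf2.const_mul _).sub (hfg.const_mul _)
    have h2 : ∫ x, (t * f x - g x) ^ 2 ∂μ = t ^ 2 * A - 2 * t * C + B := by
      have e : (fun x => (t * f x - g x) ^ 2) =
          fun x => t ^ 2 * f x ^ 2 - 2 * t * (f x * g x) + g x ^ 2 := by
        funext x; ring
      rw [e, integral_add i1 hg2, integral_sub (hf2.const_mul _) (hfg.const_mul _),
        integral_const_mul, integral_const_mul]
    linarith [h2 ▸ h1]
  rcases eq_or_lt_of_le hA0 with h | h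
  · have hCle : C ≤ 0 := by
      by_contra hc
      push_neg at hc
      have hk := key ((B + 1) / (2 * C))
      rw [← h] at hk
      have e : 2 * ((B + 1) / (2 * C)) * C = B + 1 := by field_simp
      rw [mul_zero] at hk
      linarith [e ▸ hk]
    calc C ≤ 0 := hCle
      _ ≤ _ := mul_nonneg (Real.sqrt_nonneg _) (Real.sqrt_nonneg _)
  · have hA' : A ≠ 0 := ne_of_gt h
    have hk := key (C / A)
    have e : (C / A) ^ 2 * A - 2 * (C / A) * C + B = B - C ^ 2 / A := by
      field_simp; ring
    rw [e] at hk
    have h1 : C ^ 2 / A ≤ B := by linarith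
    have h2 : C ^ 2 ≤ A * B := by
      rw [div_le_iff₀ h] at h1; linarith
    calc C ≤ |C| := le_abs_self _
      _ = Real.sqrt (C ^ 2) := (Real.sqrt_sq_eq_abs C).symm
      _ ≤ Real.sqrt (A * B) := Real.sqrt_le_sqrt h2
      _ = Real.sqrt A * Real.sqrt B := Real.sqrt_mul hA0 B

private lemma normsq2 (x : EuclideanSpace ℝ (Fin 2)) : ‖x‖ ^ 2 = x 0 ^ 2 + x 1 ^ 2 := by
  rw [EuclideanSpace.norm_eq, Real.sq_sqrt (by positivity)]
  simp [Fin.sum_univ_two]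

private lemma quadform (a b c x : ℝ) :
    (Real.cos x) ^ 2 * a + (Real.sin x) ^ 2 * b - 2 * (Real.sin x) * (Real.cos x) * c
      = (a + b) / 2 + ((a - b) / 2) * Real.cos (2 * x) - c * Real.sin (2 * x) := by
  rw [Real.cos_two_mul, Real.sin_two_mul]
  linear_combination b * (Real.sin_sq_add_cos_sq x)

private lemma proj_memLp {α : Type*} [MeasurableSpace α] {μ : Measure α}
    {f : α → EuclideanSpace ℝ (Fin 2)} (hf : MemLp f 2 μ) (i : Fin 2) :
    MemLp (fun x => f x i) 2 μ := by
  exact (EuclideanSpace.proj (𝕜 := ℝ) i).comp_memLp' hf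

private lemma combo_memLp {α : Type*} [MeasurableSpace α] {μ : Measure α} (w₁ w₂ : ℝ)
    {f : α → EuclideanSpace ℝ (Fin 2)} (hf : MemLp f 2 μ) :
    MemLp (fun x => w₁ * f x 0 + w₂ * f x 1) 2 μ :=
  ((proj_memLp hf 0).const_mul w₁).add ((proj_memLp hf 1).const_mul w₂)

private lemma rot_apply0 (θ : ℝ) (x : EuclideanSpace ℝ (Fin 2)) :
    (WithLp.toLp 2 ((rot θ).mulVec x) : EuclideanSpace ℝ (Fin 2)) 0 = Real.cos θ * x 0 - Real.sin θ * x 1 := by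
  simp [rot, Matrix.mulVec, dotProduct, Fin.sum_univ_two]
  ring

private lemma rot_apply1 (θ : ℝ) (x : EuclideanSpace ℝ (Fin 2)) :
    (WithLp.toLp 2 ((rot θ).mulVec x) : EuclideanSpace ℝ (Fin 2)) 1 = Real.sin θ * x 0 + Real.cos θ * x 1 := by
  simp [rot, Matrix.mulVec, dotProduct, Fin.sum_univ_two]

set_option maxHeartbeats 4000000 in
/-- lower bound for rotations. Let `X = (X₁, X₂)` be square-integrable in
`ℝ²` with `m₁ = 𝔼X₁`, `m₂ = 𝔼X₂`, `a = Var X₁`, `b = Var X₂`, `c = Cov(X₁, X₂)`.  If `U, V`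
are square-integrable random vectors (on any probability space) with the laws of `R_θ X` and
`R_φ X` respectively, then
`𝔼‖U − V‖² ≥ 2(m₁² + m₂²)(1 − cos(θ−φ)) + 2(a+b) − 2√(((a−b)² + 4c²)cos²(θ−φ) + 4(ab−c²))`,
hence the squared quadratic Wasserstein distance between the laws is at least this quantity. -/
theorem stmt_11 {Ω : Type*} [MeasurableSpace Ω] (ℙ : Measure Ω) [IsProbabilityMeasure ℙ]
    (X : Ω → EuclideanSpace ℝ (Fin 2)) (hX : MemLp X 2 ℙ)
    (m₁ m₂ a b c : ℝ)
    (hm₁ : m₁ = ∫ ω, X ω 0 ∂ℙ) (hm₂ : m₂ = ∫ ω, X ω 1 ∂ℙ)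
    (ha : a = ∫ ω, (X ω 0 - m₁) ^ 2 ∂ℙ) (hb : b = ∫ ω, (X ω 1 - m₂) ^ 2 ∂ℙ)
    (hc : c = ∫ ω, (X ω 0 - m₁) * (X ω 1 - m₂) ∂ℙ)
    (θ φ : ℝ)
    {Ω' : Type*} [MeasurableSpace Ω'] (ℙ' : Measure Ω') [IsProbabilityMeasure ℙ']
    (U V : Ω' → EuclideanSpace ℝ (Fin 2))
    (hU : MemLp U 2 ℙ') (hV : MemLp V 2 ℙ')
    (hlawU : Measure.map U ℙ' =
      Measure.map (fun ω => (WithLp.toLp 2 ((rot θ).mulVec (X ω)) : EuclideanSpace ℝ (Fin 2))) ℙ)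
    (hlawV : Measure.map V ℙ' =
      Measure.map (fun ω => (WithLp.toLp 2 ((rot φ).mulVec (X ω)) : EuclideanSpace ℝ (Fin 2))) ℙ) :
    ∫ ω', ‖U ω' - V ω'‖ ^ 2 ∂ℙ' ≥
      2 * (m₁ ^ 2 + m₂ ^ 2) * (1 - Real.cos (θ - φ)) + 2 * (a + b) -
        2 * Real.sqrt (((a - b) ^ 2 + 4 * c ^ 2) * Real.cos (θ - φ) ^ 2 +
          4 * (a * b - c ^ 2)) := by
  -- Ω-side integrability
  have hX0 := proj_memLp hX 0
  have hX1 := proj_memLp hX 1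
  have iX0 : Integrable (fun ω => X ω 0) ℙ := hX0.integrable one_le_two
  have iX1 : Integrable (fun ω => X ω 1) ℙ := hX1.integrable one_le_two
  have hY0 : MemLp (fun ω => X ω 0 - m₁) 2 ℙ := hX0.sub (memLp_const m₁)
  have hY1 : MemLp (fun ω => X ω 1 - m₂) 2 ℙ := hX1.sub (memLp_const m₂)
  have iY0sq : Integrable (fun ω => (X ω 0 - m₁) ^ 2) ℙ := hY0.integrable_sq
  have iY1sq : Integrable (fun ω => (X ω 1 - m₂) ^ 2) ℙ := hY1.integrable_sq
  have iY01 : Integrable (fun ω => (X ω 0 - m₁) * (X ω 1 - m₂)) ℙ := mul_int' hY0 hY1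
  -- Ω-side moments
  have momΩ1 : ∀ α β : ℝ, ∫ ω, (α * X ω 0 + β * X ω 1) ∂ℙ = α * m₁ + β * m₂ := by
    intro α β
    rw [integral_add (iX0.const_mul α) (iX1.const_mul β), integral_const_mul,
      integral_const_mul, ← hm₁, ← hm₂]
  have momΩ2 : ∀ α β : ℝ,
      ∫ ω, (α * (X ω 0 - m₁) + β * (X ω 1 - m₂)) ^ 2 ∂ℙ
        = α ^ 2 * a + β ^ 2 * b + 2 * α * β * c := by
    intro α β
    have e : (fun ω => (α * (X ω 0 - m₁) + β * (X ω 1 - m₂)) ^ 2)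
        = fun ω => (α ^ 2 * (X ω 0 - m₁) ^ 2 + 2 * α * β * ((X ω 0 - m₁) * (X ω 1 - m₂)))
            + β ^ 2 * (X ω 1 - m₂) ^ 2 := by
      funext ω; ring
    have i1 : Integrable (fun ω => α ^ 2 * (X ω 0 - m₁) ^ 2
        + 2 * α * β * ((X ω 0 - m₁) * (X ω 1 - m₂))) ℙ :=
      (iY0sq.const_mul _).add (iY01.const_mul _)
    rw [e, integral_add i1 (iY1sq.const_mul _),
      integral_add (iY0sq.const_mul _) (iY01.const_mul _), integral_const_mul,
      integral_const_mul, integral_const_mul, ← ha, ← hb, ← hc]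
    ring
  have momΩ3 : ∫ ω, (X ω 0 ^ 2 + X ω 1 ^ 2) ∂ℙ = m₁ ^ 2 + m₂ ^ 2 + a + b := by
    have e : (fun ω => X ω 0 ^ 2 + X ω 1 ^ 2)
        = fun ω => (((X ω 0 - m₁) ^ 2 + (X ω 1 - m₂) ^ 2)
            + (2 * m₁ * X ω 0 + 2 * m₂ * X ω 1)) - (m₁ ^ 2 + m₂ ^ 2) := by
      funext ω; ring
    have i1 : Integrable (fun ω => (X ω 0 - m₁) ^ 2 + (X ω 1 - m₂) ^ 2) ℙ := iY0sq.add iY1sq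
    have i2 : Integrable (fun ω => 2 * m₁ * X ω 0 + 2 * m₂ * X ω 1) ℙ :=
      (iX0.const_mul _).add (iX1.const_mul _)
    have i3 : Integrable (fun ω => ((X ω 0 - m₁) ^ 2 + (X ω 1 - m₂) ^ 2)
        + (2 * m₁ * X ω 0 + 2 * m₂ * X ω 1)) ℙ := i1.add i2
    rw [e, integral_sub i3 (integrable_const _), integral_add i1 i2,
      integral_add iY0sq iY1sq, integral_add (iX0.const_mul _) (iX1.const_mul _),
      integral_const_mul, integral_const_mul, integral_const, ← ha, ← hb, ← hm₁, ← hm₂]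
    simp only [probReal_univ, one_smul]
    ring
  -- continuity of coordinates
  have hc0 : Continuous (fun v : EuclideanSpace ℝ (Fin 2) => v 0) :=
    (continuous_apply (0 : Fin 2)).comp (PiLp.continuous_ofLp 2 fun _ : Fin 2 => ℝ)
  have hc1 : Continuous (fun v : EuclideanSpace ℝ (Fin 2) => v 1) :=
    (continuous_apply (1 : Fin 2)).comp (PiLp.continuous_ofLp 2 fun _ : Fin 2 => ℝ)
  -- master moment-transfer lemma
  have master : ∀ (ϑ : ℝ) (W : Ω' → EuclideanSpace ℝ (Fin 2)), MemLp W 2 ℙ' →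
      Measure.map W ℙ' =
        Measure.map (fun ω => (WithLp.toLp 2 ((rot ϑ).mulVec (X ω)) : EuclideanSpace ℝ (Fin 2))) ℙ →
      (∫ x, ‖W x‖ ^ 2 ∂ℙ' = m₁ ^ 2 + m₂ ^ 2 + a + b) ∧
      ∀ w₁ w₂ : ℝ,
        (∫ x, (w₁ * W x 0 + w₂ * W x 1) ∂ℙ'
          = (w₁ * Real.cos ϑ + w₂ * Real.sin ϑ) * m₁
            + (w₂ * Real.cos ϑ - w₁ * Real.sin ϑ) * m₂) ∧
        (∫ x, (w₁ * W x 0 + w₂ * W x 1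
              - ((w₁ * Real.cos ϑ + w₂ * Real.sin ϑ) * m₁
                + (w₂ * Real.cos ϑ - w₁ * Real.sin ϑ) * m₂)) ^ 2 ∂ℙ'
          = (w₁ * Real.cos ϑ + w₂ * Real.sin ϑ) ^ 2 * a
            + (w₂ * Real.cos ϑ - w₁ * Real.sin ϑ) ^ 2 * b
            + 2 * (w₁ * Real.cos ϑ + w₂ * Real.sin ϑ)
                * (w₂ * Real.cos ϑ - w₁ * Real.sin ϑ) * c) := by
    intro ϑ W hW hlaw
    have hX0ae : AEMeasurable (fun ω => X ω 0) ℙ := hX0.aestronglyMeasurable.aemeasurable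
    have hX1ae : AEMeasurable (fun ω => X ω 1) ℙ := hX1.aestronglyMeasurable.aemeasurable
    have hYae : AEMeasurable
        (fun ω => (WithLp.toLp 2 ((rot ϑ).mulVec (X ω)) : EuclideanSpace ℝ (Fin 2))) ℙ := by
      obtain ⟨X', hX'sm, hX'ae⟩ := hX.aestronglyMeasurable
      have hm : Measurable X' := hX'sm.measurable
      have h0 : Measurable (fun ω => X' ω 0) := (measurable_pi_apply (0 : Fin 2)).comp ((WithLp.measurable_ofLp _ _).comp hm)
      have h1 : Measurable (fun ω => X' ω 1) := (measurable_pi_apply (1 : Fin 2)).comp ((WithLp.measurable_ofLp _ _).comp hm)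
      refine ⟨fun ω => (WithLp.toLp 2 ((rot ϑ).mulVec (X' ω)) : EuclideanSpace ℝ (Fin 2)), ?_, ?_⟩
      · refine (WithLp.measurable_toLp 2 (Fin 2 → ℝ)).comp
          (f := fun ω => (rot ϑ).mulVec (X' ω)) ?_
        apply measurable_pi_iff.mpr
        intro i
        fin_cases i
        · have h : (fun ω => (WithLp.toLp 2 ((rot ϑ).mulVec (X' ω)) : EuclideanSpace ℝ (Fin 2)) 0)
              = fun ω => Real.cos ϑ * X' ω 0 - Real.sin ϑ * X' ω 1 :=
            funext fun ω => rot_apply0 ϑ (X' ω)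
          exact h ▸ ((h0.const_mul (Real.cos ϑ)).sub (h1.const_mul (Real.sin ϑ)))
        · have h : (fun ω => (WithLp.toLp 2 ((rot ϑ).mulVec (X' ω)) : EuclideanSpace ℝ (Fin 2)) 1)
              = fun ω => Real.sin ϑ * X' ω 0 + Real.cos ϑ * X' ω 1 :=
            funext fun ω => rot_apply1 ϑ (X' ω)
          exact h ▸ ((h0.const_mul (Real.sin ϑ)).add (h1.const_mul (Real.cos ϑ)))
      · exact hX'ae.fun_comp fun v => (WithLp.toLp 2 ((rot ϑ).mulVec v) : EuclideanSpace ℝ (Fin 2))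
    have hWae : AEMeasurable W ℙ' := hW.aestronglyMeasurable.aemeasurable
    have trans : ∀ g : EuclideanSpace ℝ (Fin 2) → ℝ, Continuous g →
        ∫ x, g (W x) ∂ℙ' = ∫ ω, g (WithLp.toLp 2 ((rot ϑ).mulVec (X ω)) : EuclideanSpace ℝ (Fin 2)) ∂ℙ := by
      intro g hg
      have h1 := (integral_map hWae hg.aestronglyMeasurable).symm
      have h2 := integral_map hYae hg.aestronglyMeasurable
      have h3 := congrArg (fun m => ∫ y, g y ∂m) hlaw
      exact h1.trans (h3.trans h2)
    refine ⟨?_, ?_⟩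
    · have hgc : Continuous (fun v : EuclideanSpace ℝ (Fin 2) => v 0 ^ 2 + v 1 ^ 2) :=
        (hc0.pow 2).add (hc1.pow 2)
      have h1 : ∫ x, (W x 0 ^ 2 + W x 1 ^ 2) ∂ℙ'
          = ∫ ω, ((WithLp.toLp 2 ((rot ϑ).mulVec (X ω)) : EuclideanSpace ℝ (Fin 2)) 0 ^ 2
              + (WithLp.toLp 2 ((rot ϑ).mulVec (X ω)) : EuclideanSpace ℝ (Fin 2)) 1 ^ 2) ∂ℙ :=
        trans _ hgc
      have e0 : (fun x => ‖W x‖ ^ 2) = fun x => W x 0 ^ 2 + W x 1 ^ 2 :=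
        funext fun x => normsq2 (W x)
      rw [e0, h1]
      have e : (fun ω => (WithLp.toLp 2 ((rot ϑ).mulVec (X ω)) : EuclideanSpace ℝ (Fin 2)) 0 ^ 2
            + (WithLp.toLp 2 ((rot ϑ).mulVec (X ω)) : EuclideanSpace ℝ (Fin 2)) 1 ^ 2)
          = fun ω => X ω 0 ^ 2 + X ω 1 ^ 2 := by
        funext ω
        rw [rot_apply0, rot_apply1]
        linear_combination (X ω 0 ^ 2 + X ω 1 ^ 2) * (Real.sin_sq_add_cos_sq ϑ)
      rw [e, momΩ3]
    · intro w₁ w₂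
      constructor
      · have hgc : Continuous (fun v : EuclideanSpace ℝ (Fin 2) => w₁ * v 0 + w₂ * v 1) :=
          (continuous_const.mul hc0).add (continuous_const.mul hc1)
        have h1 : ∫ x, (w₁ * W x 0 + w₂ * W x 1) ∂ℙ'
            = ∫ ω, (w₁ * (WithLp.toLp 2 ((rot ϑ).mulVec (X ω)) : EuclideanSpace ℝ (Fin 2)) 0
                + w₂ * (WithLp.toLp 2 ((rot ϑ).mulVec (X ω)) : EuclideanSpace ℝ (Fin 2)) 1) ∂ℙ :=
          trans _ hgc
        rw [h1]
        have e : (fun ω => w₁ * (WithLp.toLp 2 ((rot ϑ).mulVec (X ω)) : EuclideanSpace ℝ (Fin 2)) 0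
              + w₂ * (WithLp.toLp 2 ((rot ϑ).mulVec (X ω)) : EuclideanSpace ℝ (Fin 2)) 1)
            = fun ω => (w₁ * Real.cos ϑ + w₂ * Real.sin ϑ) * X ω 0
                + (w₂ * Real.cos ϑ - w₁ * Real.sin ϑ) * X ω 1 := by
          funext ω; rw [rot_apply0, rot_apply1]; ring
        rw [e, momΩ1]
      · have hgc : Continuous (fun v : EuclideanSpace ℝ (Fin 2) =>
            (w₁ * v 0 + w₂ * v 1
              - ((w₁ * Real.cos ϑ + w₂ * Real.sin ϑ) * m₁
                + (w₂ * Real.cos ϑ - w₁ * Real.sin ϑ) * m₂)) ^ 2) :=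
          (((continuous_const.mul hc0).add (continuous_const.mul hc1)).sub
            continuous_const).pow 2
        have h1 : ∫ x, (w₁ * W x 0 + w₂ * W x 1
              - ((w₁ * Real.cos ϑ + w₂ * Real.sin ϑ) * m₁
                + (w₂ * Real.cos ϑ - w₁ * Real.sin ϑ) * m₂)) ^ 2 ∂ℙ'
            = ∫ ω, (w₁ * (WithLp.toLp 2 ((rot ϑ).mulVec (X ω)) : EuclideanSpace ℝ (Fin 2)) 0
                + w₂ * (WithLp.toLp 2 ((rot ϑ).mulVec (X ω)) : EuclideanSpace ℝ (Fin 2)) 1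
              - ((w₁ * Real.cos ϑ + w₂ * Real.sin ϑ) * m₁
                + (w₂ * Real.cos ϑ - w₁ * Real.sin ϑ) * m₂)) ^ 2 ∂ℙ :=
          trans _ hgc
        rw [h1]
        have e : (fun ω => (w₁ * (WithLp.toLp 2 ((rot ϑ).mulVec (X ω)) : EuclideanSpace ℝ (Fin 2)) 0
                + w₂ * (WithLp.toLp 2 ((rot ϑ).mulVec (X ω)) : EuclideanSpace ℝ (Fin 2)) 1
              - ((w₁ * Real.cos ϑ + w₂ * Real.sin ϑ) * m₁
                + (w₂ * Real.cos ϑ - w₁ * Real.sin ϑ) * m₂)) ^ 2)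
            = fun ω => ((w₁ * Real.cos ϑ + w₂ * Real.sin ϑ) * (X ω 0 - m₁)
                + (w₂ * Real.cos ϑ - w₁ * Real.sin ϑ) * (X ω 1 - m₂)) ^ 2 := by
          funext ω; rw [rot_apply0, rot_apply1]; ring
        rw [e, momΩ2]
  -- trigonometric setup
  obtain ⟨ψ, hψ⟩ : ∃ x : ℝ, x = θ - φ := ⟨_, rfl⟩
  rw [← hψ]
  obtain ⟨d, hd⟩ : ∃ x : ℝ, x = (a - b) / 2 := ⟨_, rfl⟩
  obtain ⟨r, hr⟩ : ∃ x : ℝ, x = Real.sqrt (d ^ 2 + c ^ 2) := ⟨_, rfl⟩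
  obtain ⟨w, hw⟩ : ∃ x : ℂ,
      x = ⟨c * Real.cos ψ - d * Real.sin ψ, d * Real.cos ψ + c * Real.sin ψ⟩ := ⟨_, rfl⟩
  obtain ⟨e, he⟩ : ∃ x : ℝ, x = Complex.arg w := ⟨_, rfl⟩
  obtain ⟨τ, hτ⟩ : ∃ x : ℝ, x = θ - e / 2 := ⟨_, rfl⟩
  obtain ⟨p, hp⟩ : ∃ x : ℝ, x = Real.cos τ := ⟨_, rfl⟩
  obtain ⟨q, hq⟩ : ∃ x : ℝ, x = Real.sin τ := ⟨_, rfl⟩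
  have hrnn : 0 ≤ r := hr ▸ Real.sqrt_nonneg _
  have hr2 : r ^ 2 = d ^ 2 + c ^ 2 := by rw [hr]; exact Real.sq_sqrt (by positivity)
  have hpq : p ^ 2 + q ^ 2 = 1 := by rw [hp, hq]; exact Real.cos_sq_add_sin_sq τ
  have hwre : w.re = c * Real.cos ψ - d * Real.sin ψ := by rw [hw]
  have hwim : w.im = d * Real.cos ψ + c * Real.sin ψ := by rw [hw]
  -- key identities
  have hK1 : d * Real.cos e - c * Real.sin e = -(r * Real.sin ψ) ∧
      d * Real.sin e + c * Real.cos e = r * Real.cos ψ := by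
    rcases eq_or_ne (d ^ 2 + c ^ 2) 0 with h0 | h0
    · have hd0 : d = 0 := by
        have h2 : d ^ 2 = 0 := by linarith only [sq_nonneg c, sq_nonneg d, h0.le, h0.ge]
        exact pow_eq_zero_iff two_ne_zero |>.mp h2
      have hc0 : c = 0 := by
        have h2 : c ^ 2 = 0 := by linarith only [sq_nonneg c, sq_nonneg d, h0.le, h0.ge]
        exact pow_eq_zero_iff two_ne_zero |>.mp h2
      have hr0 : r = 0 := by rw [hr, h0, Real.sqrt_zero]
      rw [hd0, hc0, hr0]; constructor <;> ring
    · have hnormsq : Complex.normSq w = d ^ 2 + c ^ 2 := by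
        rw [Complex.normSq_apply, hwre, hwim]
        linear_combination (c ^ 2 + d ^ 2) * (Real.sin_sq_add_cos_sq ψ)
      have hwne : w ≠ 0 := by
        intro hcontra
        apply h0
        rw [← hnormsq, hcontra, Complex.normSq_zero]
      have habs : ‖w‖ = r := by
        rw [Complex.norm_def, hnormsq, hr]
      have hrpos : 0 < r := by
        rw [hr]
        exact Real.sqrt_pos.mpr (lt_of_le_of_ne (by positivity) (Ne.symm h0))
      have hce : Real.cos e = w.re / r := by rw [he, Complex.cos_arg hwne, habs]
      have hse : Real.sin e = w.im / r := by rw [he, Complex.sin_arg, habs]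
      have hrne : r ≠ 0 := ne_of_gt hrpos
      have h1 : r * Real.cos e = c * Real.cos ψ - d * Real.sin ψ := by
        rw [hce, hwre]; field_simp
      have h2 : r * Real.sin e = d * Real.cos ψ + c * Real.sin ψ := by
        rw [hse, hwim]; field_simp
      constructor
      · apply mul_left_cancel₀ hrne
        linear_combination d * h1 - c * h2 + Real.sin ψ * hr2
      · apply mul_left_cancel₀ hrne
        linear_combination d * h2 + c * h1 - Real.cos ψ * hr2
  obtain ⟨hK1, hb2⟩ := hK1
  have hK2 : d * Real.cos (e - 2 * ψ) - c * Real.sin (e - 2 * ψ) = r * Real.sin ψ := by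
    rw [Real.cos_sub, Real.sin_sub, Real.cos_two_mul, Real.sin_two_mul]
    linear_combination (2 * Real.cos ψ ^ 2 - 1) * hK1 + (2 * Real.sin ψ * Real.cos ψ) * hb2
  -- coefficient identities
  have hθτ : θ - τ = e / 2 := by rw [hτ]; ring
  have hφτ : φ - τ = e / 2 - ψ := by rw [hτ, hψ]; ring
  have hEq1 : p * Real.cos θ + q * Real.sin θ = Real.cos (e / 2) := by
    rw [hp, hq, ← hθτ, Real.cos_sub]; ring
  have hEq2 : q * Real.cos θ - p * Real.sin θ = -Real.sin (e / 2) := by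
    rw [hp, hq, ← hθτ, Real.sin_sub]; ring
  have hEq3 : -q * Real.cos θ + p * Real.sin θ = Real.sin (e / 2) := by
    rw [hp, hq, ← hθτ, Real.sin_sub]; ring
  have hEq4 : p * Real.cos θ - -q * Real.sin θ = Real.cos (e / 2) := by
    rw [hp, hq, ← hθτ, Real.cos_sub]; ring
  have hEq1V : p * Real.cos φ + q * Real.sin φ = Real.cos (e / 2 - ψ) := by
    rw [hp, hq, ← hφτ, Real.cos_sub]; ring
  have hEq2V : q * Real.cos φ - p * Real.sin φ = -Real.sin (e / 2 - ψ) := by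
    rw [hp, hq, ← hφτ, Real.sin_sub]; ring
  have hEq3V : -q * Real.cos φ + p * Real.sin φ = Real.sin (e / 2 - ψ) := by
    rw [hp, hq, ← hφτ, Real.sin_sub]; ring
  have hEq4V : p * Real.cos φ - -q * Real.sin φ = Real.cos (e / 2 - ψ) := by
    rw [hp, hq, ← hφτ, Real.cos_sub]; ring
  -- closed forms of the variances
  have hA1 : (p * Real.cos θ + q * Real.sin θ) ^ 2 * a
      + (q * Real.cos θ - p * Real.sin θ) ^ 2 * b
      + 2 * (p * Real.cos θ + q * Real.sin θ) * (q * Real.cos θ - p * Real.sin θ) * c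
      = (a + b) / 2 - r * Real.sin ψ := by
    rw [hEq1, hEq2]
    have hq1 := quadform a b c (e / 2)
    rw [show 2 * (e / 2) = e by ring] at hq1
    linear_combination hq1 + hK1 - Real.cos e * hd
  have hA2 : (-q * Real.cos θ + p * Real.sin θ) ^ 2 * a
      + (p * Real.cos θ - -q * Real.sin θ) ^ 2 * b
      + 2 * (-q * Real.cos θ + p * Real.sin θ) * (p * Real.cos θ - -q * Real.sin θ) * c
      = (a + b) / 2 + r * Real.sin ψ := by
    rw [hEq3, hEq4]
    have hq1 := quadform b a (-c) (e / 2)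
    rw [show 2 * (e / 2) = e by ring] at hq1
    linear_combination hq1 - hK1 + Real.cos e * hd
  have hB1 : (p * Real.cos φ + q * Real.sin φ) ^ 2 * a
      + (q * Real.cos φ - p * Real.sin φ) ^ 2 * b
      + 2 * (p * Real.cos φ + q * Real.sin φ) * (q * Real.cos φ - p * Real.sin φ) * c
      = (a + b) / 2 + r * Real.sin ψ := by
    rw [hEq1V, hEq2V]
    have hq1 := quadform a b c (e / 2 - ψ)
    rw [show 2 * (e / 2 - ψ) = e - 2 * ψ by ring] at hq1
    linear_combination hq1 + hK2 - Real.cos (e - 2 * ψ) * hd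
  have hB2 : (-q * Real.cos φ + p * Real.sin φ) ^ 2 * a
      + (p * Real.cos φ - -q * Real.sin φ) ^ 2 * b
      + 2 * (-q * Real.cos φ + p * Real.sin φ) * (p * Real.cos φ - -q * Real.sin φ) * c
      = (a + b) / 2 - r * Real.sin ψ := by
    rw [hEq3V, hEq4V]
    have hq1 := quadform b a (-c) (e / 2 - ψ)
    rw [show 2 * (e / 2 - ψ) = e - 2 * ψ by ring] at hq1
    linear_combination hq1 - hK2 + Real.cos (e - 2 * ψ) * hd
  -- instantiate the master lemma
  obtain ⟨nU, mU⟩ := master θ U hU hlawU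
  obtain ⟨nV, mV⟩ := master φ V hV hlawV
  obtain ⟨mU1, vU1⟩ := mU p q
  obtain ⟨mU2, vU2⟩ := mU (-q) p
  obtain ⟨mV1, vV1⟩ := mV p q
  obtain ⟨mV2, vV2⟩ := mV (-q) p
  -- nonnegativity of variances
  have A1nn : 0 ≤ (a + b) / 2 - r * Real.sin ψ := by
    rw [← hA1, ← vU1]; exact integral_nonneg fun x => sq_nonneg _
  have A2nn : 0 ≤ (a + b) / 2 + r * Real.sin ψ := by
    rw [← hA2, ← vU2]; exact integral_nonneg fun x => sq_nonneg _
  -- mean identity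
  have hM : ((p * Real.cos θ + q * Real.sin θ) * m₁ + (q * Real.cos θ - p * Real.sin θ) * m₂)
        * ((p * Real.cos φ + q * Real.sin φ) * m₁ + (q * Real.cos φ - p * Real.sin φ) * m₂)
      + ((-q * Real.cos θ + p * Real.sin θ) * m₁ + (p * Real.cos θ - -q * Real.sin θ) * m₂)
        * ((-q * Real.cos φ + p * Real.sin φ) * m₁ + (p * Real.cos φ - -q * Real.sin φ) * m₂)
      = (m₁ ^ 2 + m₂ ^ 2) * Real.cos ψ := by
    rw [hψ, Real.cos_sub]
    linear_combination ((Real.cos θ * Real.cos φ + Real.sin θ * Real.sin φ)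
      * (m₁ ^ 2 + m₂ ^ 2)) * hpq
  -- Ω'-side integrability
  have hU0 := proj_memLp hU 0
  have hU1 := proj_memLp hU 1
  have hV0 := proj_memLp hV 0
  have hV1 := proj_memLp hV 1
  have mF1U : MemLp (fun x => p * U x 0 + q * U x 1) 2 ℙ' := combo_memLp p q hU
  have mF2U : MemLp (fun x => -q * U x 0 + p * U x 1) 2 ℙ' := combo_memLp (-q) p hU
  have mF1V : MemLp (fun x => p * V x 0 + q * V x 1) 2 ℙ' := combo_memLp p q hV
  have mF2V : MemLp (fun x => -q * V x 0 + p * V x 1) 2 ℙ' := combo_memLp (-q) p hV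
  -- cross-term Cauchy-Schwarz bound
  have cross : ∀ (F G : Ω' → ℝ), MemLp F 2 ℙ' → MemLp G 2 ℙ' → ∀ μF μG AF BG : ℝ,
      (∫ x, F x ∂ℙ' = μF) → (∫ x, G x ∂ℙ' = μG) →
      (∫ x, (F x - μF) ^ 2 ∂ℙ' = AF) → (∫ x, (G x - μG) ^ 2 ∂ℙ' = BG) →
      ∫ x, F x * G x ∂ℙ' ≤ μF * μG + Real.sqrt AF * Real.sqrt BG := by
    intro F G hF hG μF μG AF BG hmF hmG hAF hBG
    have hFc : MemLp (fun x => F x - μF) 2 ℙ' := hF.sub (memLp_const μF)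
    have hGc : MemLp (fun x => G x - μG) 2 ℙ' := hG.sub (memLp_const μG)
    have iF : Integrable F ℙ' := hF.integrable one_le_two
    have iG : Integrable G ℙ' := hG.integrable one_le_two
    have key : ∫ x, (F x - μF) * (G x - μG) ∂ℙ' = ∫ x, F x * G x ∂ℙ' - μF * μG := by
      have e : (fun x => (F x - μF) * (G x - μG))
          = fun x => F x * G x - ((μF * G x + μG * F x) - μF * μG) := by
        funext x; ring
      have i1 : Integrable (fun x => μF * G x + μG * F x) ℙ' :=
        (iG.const_mul μF).add (iF.const_mul μG)
      have i2 : Integrable (fun x => (μF * G x + μG * F x) - μF * μG) ℙ' :=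
        i1.sub (integrable_const _)
      rw [e, integral_sub (mul_int' hF hG) i2, integral_sub i1 (integrable_const _),
        integral_add (iG.const_mul μF) (iF.const_mul μG), integral_const_mul,
        integral_const_mul, integral_const, hmF, hmG]
      simp only [probReal_univ, one_smul]
      ring
    have hcs := cs0 hFc.integrable_sq hGc.integrable_sq (mul_int' hFc hGc)
    rw [hAF, hBG, key] at hcs
    linarith only [hcs]
  have bound1 := cross _ _ mF1U mF1V _ _ _ _ mU1 mV1 (vU1.trans hA1) (vV1.trans hB1)
  have bound2 := cross _ _ mF2U mF2V _ _ _ _ mU2 mV2 (vU2.trans hA2) (vV2.trans hB2)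
  -- decompose the inner product
  have decompI : ∫ x, (U x 0 * V x 0 + U x 1 * V x 1) ∂ℙ'
      = (∫ x, (p * U x 0 + q * U x 1) * (p * V x 0 + q * V x 1) ∂ℙ')
        + ∫ x, (-q * U x 0 + p * U x 1) * (-q * V x 0 + p * V x 1) ∂ℙ' := by
    rw [← integral_add (mul_int' mF1U mF1V) (mul_int' mF2U mF2V)]
    have e : (fun x => U x 0 * V x 0 + U x 1 * V x 1)
        = fun x => (p * U x 0 + q * U x 1) * (p * V x 0 + q * V x 1)
            + (-q * U x 0 + p * U x 1) * (-q * V x 0 + p * V x 1) := by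
      funext x
      linear_combination (U x 0 * V x 0 + U x 1 * V x 1) * hpq.symm
    rw [e]
  -- expand the squared distance
  have iU2 : Integrable (fun x => ‖U x‖ ^ 2) ℙ' := (memLp_two_iff_integrable_sq_norm hU.1).mp hU
  have iV2 : Integrable (fun x => ‖V x‖ ^ 2) ℙ' := (memLp_two_iff_integrable_sq_norm hV.1).mp hV
  have step1 : ∫ x, ‖U x - V x‖ ^ 2 ∂ℙ'
      = (∫ x, ‖U x‖ ^ 2 ∂ℙ') + (∫ x, ‖V x‖ ^ 2 ∂ℙ')
        - 2 * ∫ x, (U x 0 * V x 0 + U x 1 * V x 1) ∂ℙ' := by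
    have e : (fun x => ‖U x - V x‖ ^ 2)
        = fun x => (‖U x‖ ^ 2 + ‖V x‖ ^ 2) - 2 * (U x 0 * V x 0 + U x 1 * V x 1) := by
      funext x
      have h0 : (U x - V x) 0 = U x 0 - V x 0 := by simp
      have h1 : (U x - V x) 1 = U x 1 - V x 1 := by simp
      rw [normsq2, normsq2 (U x), normsq2 (V x), h0, h1]
      ring
    have i1 : Integrable (fun x => ‖U x‖ ^ 2 + ‖V x‖ ^ 2) ℙ' := iU2.add iV2
    have i2 : Integrable (fun x => 2 * (U x 0 * V x 0 + U x 1 * V x 1)) ℙ' :=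
      ((mul_int' hU0 hV0).add (mul_int' hU1 hV1)).const_mul 2
    rw [e, integral_sub i1 i2, integral_add iU2 iV2, integral_const_mul]
  -- square-root algebra
  have hs1 : Real.sqrt ((a + b) / 2 - r * Real.sin ψ) * Real.sqrt ((a + b) / 2 + r * Real.sin ψ)
      = Real.sqrt (((a + b) / 2) ^ 2 - (r * Real.sin ψ) ^ 2) := by
    rw [← Real.sqrt_mul A1nn]; congr 1; ring
  have hs2 : Real.sqrt ((a + b) / 2 + r * Real.sin ψ) * Real.sqrt ((a + b) / 2 - r * Real.sin ψ)
      = Real.sqrt (((a + b) / 2) ^ 2 - (r * Real.sin ψ) ^ 2) := by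
    rw [← Real.sqrt_mul A2nn]; congr 1; ring
  have hT : ((a - b) ^ 2 + 4 * c ^ 2) * Real.cos ψ ^ 2 + 4 * (a * b - c ^ 2)
      = 4 * (((a + b) / 2) ^ 2 - (r * Real.sin ψ) ^ 2) := by
    linear_combination (4 * Real.sin ψ ^ 2) * hr2
      + (4 * Real.sin ψ ^ 2 * (d + (a - b) / 2)) * hd
      + ((a - b) ^ 2 + 4 * c ^ 2) * (Real.sin_sq_add_cos_sq ψ)
  have Znn : 0 ≤ ((a + b) / 2) ^ 2 - (r * Real.sin ψ) ^ 2 :=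
    calc (0:ℝ) ≤ ((a + b) / 2 - r * Real.sin ψ) * ((a + b) / 2 + r * Real.sin ψ) :=
          mul_nonneg A1nn A2nn
      _ = ((a + b) / 2) ^ 2 - (r * Real.sin ψ) ^ 2 := by ring
  have hsqrtT : Real.sqrt (((a - b) ^ 2 + 4 * c ^ 2) * Real.cos ψ ^ 2 + 4 * (a * b - c ^ 2))
      = 2 * Real.sqrt (((a + b) / 2) ^ 2 - (r * Real.sin ψ) ^ 2) := by
    rw [hT, show (4 : ℝ) * (((a + b) / 2) ^ 2 - (r * Real.sin ψ) ^ 2)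
        = 2 ^ 2 * (((a + b) / 2) ^ 2 - (r * Real.sin ψ) ^ 2) by ring,
      Real.sqrt_mul (by positivity : (0 : ℝ) ≤ 2 ^ 2),
      Real.sqrt_sq (by norm_num : (0 : ℝ) ≤ 2)]
  -- final assembly
  have hI : ∫ x, (U x 0 * V x 0 + U x 1 * V x 1) ∂ℙ'
      ≤ (m₁ ^ 2 + m₂ ^ 2) * Real.cos ψ
        + 2 * Real.sqrt (((a + b) / 2) ^ 2 - (r * Real.sin ψ) ^ 2) := by
    rw [decompI]
    have h := add_le_add bound1 bound2
    rw [hs1, hs2] at h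
    refine le_trans h (le_of_eq ?_)
    linear_combination hM
  have final1 : ∫ x, ‖U x - V x‖ ^ 2 ∂ℙ'
      ≥ 2 * (m₁ ^ 2 + m₂ ^ 2 + a + b)
        - 2 * ((m₁ ^ 2 + m₂ ^ 2) * Real.cos ψ
          + 2 * Real.sqrt (((a + b) / 2) ^ 2 - (r * Real.sin ψ) ^ 2)) := by
    rw [step1, nU, nV]
    linarith only [hI]
  linarith only [final1, hsqrtT]
end

section
/- Let m_1, m_2 ∈ ℝ and let a, b, c ∈ ℝ satisfy a ≥ 0, b ≥ 0, a + b > 0, and c² ≤ ab. Define g(θ, φ) = 2(m_1² + m_2²)(1 − cos(θ − φ)) + 2(a + b) − 2√(((a − b)² + 4c²)·cos²(θ − φ) + 4(ab − c²)). Then for all θ, φ ∈ ℝ with |θ − φ| ≤ π/2, one has g(θ, φ) ≥ (8(m_1² + m_2²)/π² + 4((a − b)² + 4c²)/((4 + π²)(a + b)))·|θ − φ|². -/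
open Real

/-- Sharp linear lower bound for `sin` on `[0, π/4]` via concavity. -/
lemma aux_sin_lb {u : ℝ} (hu0 : 0 ≤ u) (hu : u ≤ π / 4) :
    2 * Real.sqrt 2 / π * u ≤ Real.sin u := by
  have hπ := Real.pi_pos
  have ha : (0:ℝ) ≤ 4 * u / π := by positivity
  have hb : (0:ℝ) ≤ 1 - 4 * u / π := by
    rw [sub_nonneg, div_le_one hπ]; linarith
  have habs : (4 * u / π) + (1 - 4 * u / π) = 1 := by ring
  have key := strictConcaveOn_sin_Icc.concaveOn.2
    (x := π / 4) (y := 0)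
    ⟨by positivity, by linarith⟩ ⟨le_rfl, hπ.le⟩ ha hb habs
  rw [smul_eq_mul, smul_eq_mul, smul_eq_mul, smul_eq_mul,
    Real.sin_zero, Real.sin_pi_div_four] at key
  have harg : 4 * u / π * (π / 4) + (1 - 4 * u / π) * 0 = u := by
    field_simp
    ring
  rw [harg] at key
  have h2 : 4 * u / π * (Real.sqrt 2 / 2) = 2 * Real.sqrt 2 / π * u := by ring
  linarith [key]

/-- Sharp parabolic lower bound `1 - cos t ≥ (4/π²) t²` on `[0, π/2]`. -/
lemma aux_cos_lb {t : ℝ} (ht0 : 0 ≤ t) (ht : t ≤ π / 2) :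
    4 / π ^ 2 * t ^ 2 ≤ 1 - Real.cos t := by
  have hπ := Real.pi_pos
  have h1 : 2 * Real.sqrt 2 / π * (t / 2) ≤ Real.sin (t / 2) :=
    aux_sin_lb (by linarith) (by linarith)
  have h2 := pow_le_pow_left₀ (by positivity) h1 2
  have hs2 : Real.sqrt 2 ^ 2 = 2 := Real.sq_sqrt (by norm_num)
  have h3 : (2 * Real.sqrt 2 / π * (t / 2)) ^ 2 = 2 / π ^ 2 * t ^ 2 := by
    rw [show (2 * Real.sqrt 2 / π * (t / 2)) ^ 2
        = Real.sqrt 2 ^ 2 * (t ^ 2 / π ^ 2) by ring, hs2]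
    ring
  have h4 := Real.sin_sq_eq_half_sub (t / 2)
  rw [h3] at h2
  have h5 : 2 * (t / 2) = t := by ring
  rw [h5] at h4
  have h6 : 4 / π ^ 2 * t ^ 2 = 2 * (2 / π ^ 2 * t ^ 2) := by ring
  linarith

/-- Lower bound `2A - 2√(A² - y) ≥ y/A` for `0 ≤ y ≤ A²`, `A > 0`. -/
lemma aux_sqrt_bound {A y : ℝ} (hA : 0 < A) (hy0 : 0 ≤ y) (hyA : y ≤ A ^ 2) :
    y / A ≤ 2 * A - 2 * Real.sqrt (A ^ 2 - y) := by
  have hw0 : 0 ≤ A - y / (2 * A) := by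
    rw [sub_nonneg, div_le_iff₀ (by linarith : (0:ℝ) < 2 * A)]
    nlinarith
  have h1 : (A - y / (2 * A)) ^ 2 = A ^ 2 - y + (y / (2 * A)) ^ 2 := by
    field_simp
    ring
  have hle : A ^ 2 - y ≤ (A - y / (2 * A)) ^ 2 := by
    nlinarith [sq_nonneg (y / (2 * A))]
  have hsq : Real.sqrt (A ^ 2 - y) ≤ A - y / (2 * A) :=
    calc Real.sqrt (A ^ 2 - y) ≤ Real.sqrt ((A - y / (2 * A)) ^ 2) :=
          Real.sqrt_le_sqrt hle
      _ = A - y / (2 * A) := Real.sqrt_sq hw0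
  have h2 : 2 * (A - y / (2 * A)) = 2 * A - y / A := by
    field_simp
  linarith

/-- Monotone comparison step for part B. -/
lemma aux_div_bound {K tq A : ℝ} (hK0 : 0 ≤ K) (htq : 0 ≤ tq) (hA : 0 < A)
    (h : 4 * K * tq / π ^ 2 ≤ y') (hy' : y' / A ≤ z) :
    4 * K / ((4 + π ^ 2) * A) * tq ≤ z := by
  have hπ := Real.pi_pos
  have hπ2 : (0:ℝ) < π ^ 2 := by positivity
  have hπ4 : (0:ℝ) < 4 + π ^ 2 := by linarith
  have h4 : 4 * K * tq / (4 + π ^ 2) ≤ 4 * K * tq / π ^ 2 :=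
    div_le_div_of_nonneg_left (by positivity) hπ2 (by linarith)
  have heq : 4 * K / ((4 + π ^ 2) * A) * tq = (4 * K * tq / (4 + π ^ 2)) / A := by
    field_simp
  rw [heq]
  calc (4 * K * tq / (4 + π ^ 2)) / A ≤ y' / A := by
        apply div_le_div_of_nonneg_right _ hA.le
        · linarith
    _ ≤ z := hy'

/-- quadratic lower bound on `g`. Let `m₁, m₂ ∈ ℝ` and `a, b, c ∈ ℝ` with
`a ≥ 0`, `b ≥ 0`, `a + b > 0`, `c² ≤ ab`.  Define
`g(θ, φ) = 2(m₁² + m₂²)(1 − cos(θ−φ)) + 2(a+b) − 2√(((a−b)² + 4c²)cos²(θ−φ) + 4(ab−c²))`.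
Then for `|θ − φ| ≤ π/2`,
`g(θ, φ) ≥ (8(m₁² + m₂²)/π² + 4((a−b)² + 4c²)/((4+π²)(a+b)))·|θ − φ|²`. -/
theorem stmt_12 (m₁ m₂ a b c : ℝ) (ha : 0 ≤ a) (hb : 0 ≤ b) (hab : 0 < a + b)
    (hc : c ^ 2 ≤ a * b) (θ φ : ℝ) (hθφ : |θ - φ| ≤ Real.pi / 2) :
    2 * (m₁ ^ 2 + m₂ ^ 2) * (1 - Real.cos (θ - φ)) + 2 * (a + b) -
        2 * Real.sqrt (((a - b) ^ 2 + 4 * c ^ 2) * Real.cos (θ - φ) ^ 2 +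
          4 * (a * b - c ^ 2)) ≥
      (8 * (m₁ ^ 2 + m₂ ^ 2) / Real.pi ^ 2 +
          4 * ((a - b) ^ 2 + 4 * c ^ 2) / ((4 + Real.pi ^ 2) * (a + b))) *
        |θ - φ| ^ 2 := by
  have hπ := Real.pi_pos
  have hπ2 : (0:ℝ) < π ^ 2 := by positivity
  set t := |θ - φ| with htdef
  have ht0 : 0 ≤ t := abs_nonneg _
  set S := m₁ ^ 2 + m₂ ^ 2 with hS
  set K := (a - b) ^ 2 + 4 * c ^ 2 with hK
  set A := a + b with hA
  have hS0 : 0 ≤ S := by rw [hS]; positivity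
  have hK0 : 0 ≤ K := by rw [hK]; positivity
  have hA0 : (0:ℝ) < A := hab
  have hcost : Real.cos (θ - φ) = Real.cos t := (Real.cos_abs _).symm
  -- Part A
  have hcos := aux_cos_lb ht0 hθφ
  have partA : 8 * S / π ^ 2 * t ^ 2 ≤ 2 * S * (1 - Real.cos t) := by
    calc 8 * S / π ^ 2 * t ^ 2 = 2 * S * (4 / π ^ 2 * t ^ 2) := by ring
      _ ≤ 2 * S * (1 - Real.cos t) :=
          mul_le_mul_of_nonneg_left hcos (by linarith)
  -- rewrite sqrt argument
  have hKA : K ≤ A ^ 2 := by rw [hK, hA]; nlinarith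
  have hy0 : 0 ≤ K * Real.sin t ^ 2 := mul_nonneg hK0 (sq_nonneg _)
  have hyA : K * Real.sin t ^ 2 ≤ A ^ 2 := by
    have h1 : Real.sin t ^ 2 ≤ 1 := Real.sin_sq_le_one t
    nlinarith
  have hargeq : K * Real.cos t ^ 2 + 4 * (a * b - c ^ 2)
      = A ^ 2 - K * Real.sin t ^ 2 := by
    have h1 := Real.sin_sq_add_cos_sq t
    rw [hK, hA]
    linear_combination ((a - b) ^ 2 + 4 * c ^ 2) * h1
  -- Jordan lower bound on y
  have hjordan : 2 / π * t ≤ Real.sin t := Real.mul_le_sin ht0 hθφ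
  have hsin2 : (2 / π * t) ^ 2 ≤ Real.sin t ^ 2 :=
    pow_le_pow_left₀ (by positivity) hjordan 2
  have hylb : 4 * K * t ^ 2 / π ^ 2 ≤ K * Real.sin t ^ 2 := by
    have h1 : (2 / π * t) ^ 2 = 4 * t ^ 2 / π ^ 2 := by
      rw [mul_pow, div_pow]
      ring
    calc 4 * K * t ^ 2 / π ^ 2 = K * (4 * t ^ 2 / π ^ 2) := by ring
      _ ≤ K * Real.sin t ^ 2 := by
          apply mul_le_mul_of_nonneg_left _ hK0
          rw [← h1]; exact hsin2
  -- Part B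
  have hstep : K * Real.sin t ^ 2 / A
      ≤ 2 * A - 2 * Real.sqrt (A ^ 2 - K * Real.sin t ^ 2) :=
    aux_sqrt_bound hA0 hy0 hyA
  have partB : 4 * K / ((4 + π ^ 2) * A) * t ^ 2
      ≤ 2 * A - 2 * Real.sqrt (A ^ 2 - K * Real.sin t ^ 2) :=
    aux_div_bound hK0 (sq_nonneg t) hA0 hylb hstep
  -- assemble
  rw [hcost, hargeq, ge_iff_le]
  have expand : (8 * S / π ^ 2 + 4 * K / ((4 + π ^ 2) * A)) * t ^ 2
      = 8 * S / π ^ 2 * t ^ 2 + 4 * K / ((4 + π ^ 2) * A) * t ^ 2 := by ring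
  rw [expand]
  linarith
end

section
/- Let m_1, m_2 ∈ ℝ and let a, b, c ∈ ℝ satisfy a ≥ 0, b ≥ 0, and c² < ab. Define g(θ, φ) = 2(m_1² + m_2²)(1 − cos(θ − φ)) + 2(a + b) − 2√(((a − b)² + 4c²)·cos²(θ − φ) + 4(ab − c²)). Then for all θ, φ ∈ ℝ with |θ − φ| ≤ π/2, one has g(θ, φ) ≤ (m_1² + m_2² + ((a − b)² + 4c²)/√(ab − c²))·|θ − φ|². -/
/-- quadratic upper bound on `g`. Let `m₁, m₂ ∈ ℝ` and `a, b, c ∈ ℝ` with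
`a ≥ 0`, `b ≥ 0`, `c² < ab`.  Define
`g(θ, φ) = 2(m₁² + m₂²)(1 − cos(θ−φ)) + 2(a+b) − 2√(((a−b)² + 4c²)cos²(θ−φ) + 4(ab−c²))`.
Then for `|θ − φ| ≤ π/2`,
`g(θ, φ) ≤ (m₁² + m₂² + ((a−b)² + 4c²)/√(ab − c²))·|θ − φ|²`. -/
theorem stmt_13 (m₁ m₂ a b c : ℝ) (ha : 0 ≤ a) (hb : 0 ≤ b)
    (hc : c ^ 2 < a * b) (θ φ : ℝ) (hθφ : |θ - φ| ≤ Real.pi / 2) :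
    2 * (m₁ ^ 2 + m₂ ^ 2) * (1 - Real.cos (θ - φ)) + 2 * (a + b) -
        2 * Real.sqrt (((a - b) ^ 2 + 4 * c ^ 2) * Real.cos (θ - φ) ^ 2 +
          4 * (a * b - c ^ 2)) ≤
      (m₁ ^ 2 + m₂ ^ 2 + ((a - b) ^ 2 + 4 * c ^ 2) / Real.sqrt (a * b - c ^ 2)) *
        |θ - φ| ^ 2 := by
  set t := θ - φ with ht
  set K := (a - b) ^ 2 + 4 * c ^ 2 with hK
  set D := a * b - c ^ 2 with hD
  have hD0 : 0 < D := by simp [hD]; linarith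
  have hK0 : 0 ≤ K := by positivity
  have hsD : 0 < Real.sqrt D := Real.sqrt_pos.mpr hD0
  have hsD2 : Real.sqrt D ^ 2 = D := Real.sq_sqrt hD0.le
  have habt : |t| ^ 2 = t ^ 2 := sq_abs t
  -- 1 - cos t ≤ t^2 / 2
  have hcos1 : 1 - Real.cos t ≤ t ^ 2 / 2 := by
    have h1 := Real.sin_sq_le_sq (x := t / 2)
    have h2 : Real.cos (t / 2) ^ 2 = 1 / 2 + Real.cos t / 2 := by
      have := Real.cos_sq (t / 2); rwa [show 2 * (t / 2) = t by ring] at this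
    have h3 : Real.sin (t / 2) ^ 2 = 1 - Real.cos (t / 2) ^ 2 := Real.sin_sq (t / 2)
    nlinarith
  have hM : (0:ℝ) ≤ m₁ ^ 2 + m₂ ^ 2 := by positivity
  -- the sqrt term
  set S := Real.sqrt (K * Real.cos t ^ 2 + 4 * D) with hS
  have harg : 0 ≤ K * Real.cos t ^ 2 + 4 * D := by positivity
  clear_value t K D S
  have hS2 : S ^ 2 = K * Real.cos t ^ 2 + 4 * D := by rw [hS]; exact Real.sq_sqrt harg
  have hS0 : 0 ≤ S := hS ▸ Real.sqrt_nonneg _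
  have hSge : 2 * Real.sqrt D ≤ S := by
    have : Real.sqrt (4 * D) ≤ S := by
      rw [hS]; apply Real.sqrt_le_sqrt; nlinarith [sq_nonneg (Real.cos t)]
    calc 2 * Real.sqrt D = Real.sqrt 4 * Real.sqrt D := by
          rw [show (4:ℝ) = 2^2 by norm_num, Real.sqrt_sq (by norm_num : (0:ℝ) ≤ 2)]
      _ = Real.sqrt (4 * D) := (Real.sqrt_mul (by norm_num) D).symm
      _ ≤ S := this
  have hSle : S ≤ a + b := by
    have hsum : (a + b) ^ 2 = K + 4 * D := by rw [hK, hD]; ring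
    have : S ≤ Real.sqrt ((a + b) ^ 2) := by
      rw [hS]; apply Real.sqrt_le_sqrt
      rw [hsum]
      nlinarith [Real.cos_sq_le_one t]
    rwa [Real.sqrt_sq (by linarith)] at this
  -- key : 2(a+b) - 2S ≤ (K/√D) t²
  have hsin : Real.sin t ^ 2 ≤ t ^ 2 := Real.sin_sq_le_sq
  have hprod : (a + b - S) * (a + b + S) = K * (1 - Real.cos t ^ 2) := by
    have h : (a + b - S) * (a + b + S) = (a + b) ^ 2 - S ^ 2 := by ring
    rw [h, hS2, hK, hD]; ring
  have hkey : (a + b - S) * (2 * Real.sqrt D) ≤ K * t ^ 2 := by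
    have h1 : (a + b - S) * (2 * Real.sqrt D) ≤ (a + b - S) * (a + b + S) := by
      apply mul_le_mul_of_nonneg_left (by linarith) (by linarith)
    have h2 : K * (1 - Real.cos t ^ 2) ≤ K * t ^ 2 := by
      have : 1 - Real.cos t ^ 2 = Real.sin t ^ 2 := by
        linarith [Real.sin_sq_add_cos_sq t]
      rw [this]
      exact mul_le_mul_of_nonneg_left hsin hK0
    linarith [h1, hprod, h2]
  have hdiv : 2 * (a + b) - 2 * S ≤ K / Real.sqrt D * t ^ 2 := by
    rw [div_mul_eq_mul_div, le_div_iff₀ hsD]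
    nlinarith
  rw [habt]
  have hmain : 2 * (m₁ ^ 2 + m₂ ^ 2) * (1 - Real.cos t) ≤ (m₁ ^ 2 + m₂ ^ 2) * t ^ 2 := by
    have := mul_le_mul_of_nonneg_left hcos1 hM
    linarith
  have hexp : (m₁ ^ 2 + m₂ ^ 2 + K / Real.sqrt D) * t ^ 2
      = (m₁ ^ 2 + m₂ ^ 2) * t ^ 2 + K / Real.sqrt D * t ^ 2 := by ring
  linarith [hdiv, hmain, hexp.ge]
end

section
/- Let X = (X_1, X_2) be a square-integrable random vector on a probability space (Ω, ℙ) with values in ℝ² such that 𝔼[X_1] = 𝔼[X_2] = 0, 𝔼[X_1 X_2] = 0, 𝔼[X_1²] = a > 0, and 𝔼[X_2²] = b > 0, and let θ ∈ ℝ. Define the 2×2 matrix T := (4ab + (a − b)²cos²θ)^{−1/2} · [[b + a·cos²θ + b·sin²θ, (a − b)·cos θ·sin θ], [(a − b)·cos θ·sin θ, a + b·cos²θ + a·sin²θ]]. Then det(T) = 1, the matrix Σ_X·T satisfies (Σ_X·T)·(Σ_X·T) = Σ_X·Σ_{R_θ X} with tr(Σ_X·T) > 0, and 𝔼‖T·X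 − X‖² = 2(a + b) − 2√(4ab + (a − b)²·cos²θ). -/
open MeasureTheory Matrix Real

/-- Let `X = (X₁, X₂)` be square-integrable in `ℝ²` with
`𝔼X₁ = 𝔼X₂ = 0`, `𝔼[X₁X₂] = 0`, `𝔼[X₁²] = a > 0`, `𝔼[X₂²] = b > 0`, and `θ ∈ ℝ`.  With
`T := (4ab + (a−b)²cos²θ)^{−1/2}·[[b + a cos²θ + b sin²θ, (a−b)cos θ sin θ],
[(a−b)cos θ sin θ, a + b cos²θ + a sin²θ]]`, one has `det T = 1`,
`(Σ_X·T)·(Σ_X·T) = Σ_X·Σ_{R_θ X}` with `tr(Σ_X·T) > 0`, and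
`𝔼‖T·X − X‖² = 2(a+b) − 2√(4ab + (a−b)²cos²θ)`. -/
theorem stmt_14 {Ω : Type*} [MeasurableSpace Ω] (ℙ : Measure Ω) [IsProbabilityMeasure ℙ]
    (X : Ω → EuclideanSpace ℝ (Fin 2)) (hX : MemLp X 2 ℙ)
    (hmean : (∫ ω, X ω ∂ℙ) = 0) (hunc : (∫ ω, X ω 0 * X ω 1 ∂ℙ) = 0)
    (a b : ℝ) (ha : a = ∫ ω, (X ω 0) ^ 2 ∂ℙ) (hb : b = ∫ ω, (X ω 1) ^ 2 ∂ℙ)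
    (ha0 : 0 < a) (hb0 : 0 < b) (θ : ℝ)
    (T : Matrix (Fin 2) (Fin 2) ℝ)
    (hT : T = (Real.sqrt (4 * a * b + (a - b) ^ 2 * Real.cos θ ^ 2))⁻¹ •
      !![b + a * Real.cos θ ^ 2 + b * Real.sin θ ^ 2, (a - b) * Real.cos θ * Real.sin θ;
        (a - b) * Real.cos θ * Real.sin θ, a + b * Real.cos θ ^ 2 + a * Real.sin θ ^ 2]) :
    T.det = 1 ∧
      (covMatrix ℙ X * T) * (covMatrix ℙ X * T) =
        covMatrix ℙ X * covMatrix ℙ (fun ω => (WithLp.toLp 2 ((rot θ).mulVec (X ω)) : EuclideanSpace ℝ (Fin 2))) ∧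
      0 < (covMatrix ℙ X * T).trace ∧
      ∫ ω, ‖(show EuclideanSpace ℝ (Fin 2) from WithLp.toLp 2 (T.mulVec (X ω))) - X ω‖ ^ 2 ∂ℙ =
        2 * (a + b) - 2 * Real.sqrt (4 * a * b + (a - b) ^ 2 * Real.cos θ ^ 2) := by
  have hss : Real.sin θ ^ 2 + Real.cos θ ^ 2 = 1 := Real.sin_sq_add_cos_sq θ
  set c : ℝ := Real.cos θ with hc
  set s : ℝ := Real.sin θ with hs
  set D : ℝ := 4 * a * b + (a - b) ^ 2 * c ^ 2 with hD
  have hD0 : 0 < D := by nlinarith [mul_pos ha0 hb0, sq_nonneg ((a - b) * c)]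
  set u : ℝ := Real.sqrt D with hu
  have hu0 : 0 < u := Real.sqrt_pos.mpr hD0
  have hu2 : u ^ 2 = D := Real.sq_sqrt hD0.le
  -- integrability facts
  have hXint : Integrable X ℙ := hX.integrable one_le_two
  have hXi : ∀ i, MemLp (fun ω => X ω i) 2 ℙ := fun i => by
    exact (EuclideanSpace.proj (𝕜 := ℝ) i).comp_memLp' hX
  have hXiInt : ∀ i, Integrable (fun ω => X ω i) ℙ := fun i => (hXi i).integrable one_le_two
  have hmul : ∀ i j : Fin 2, Integrable (fun ω => X ω i * X ω j) ℙ := by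
    intro i j
    have h1 : Integrable (fun ω => (X ω i + X ω j) ^ 2) ℙ := ((hXi i).add (hXi j)).integrable_sq
    have h2 : Integrable (fun ω => (X ω i) ^ 2) ℙ := (hXi i).integrable_sq
    have h3 : Integrable (fun ω => (X ω j) ^ 2) ℙ := (hXi j).integrable_sq
    have : (fun ω => X ω i * X ω j) =
        fun ω => (2 : ℝ)⁻¹ * ((X ω i + X ω j) ^ 2 - ((X ω i) ^ 2 + (X ω j) ^ 2)) := by
      funext ω; ring
    rw [this]
    exact ((h1.sub (h2.add h3)).const_mul _)
  have hm : ∀ i, ∫ ω, X ω i ∂ℙ = 0 := fun i => by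
    have h := (EuclideanSpace.proj (𝕜 := ℝ) i).integral_comp_comm hXint
    simpa [hmean] using h
  -- key integral values
  have h00 : ∫ ω, X ω 0 * X ω 0 ∂ℙ = a := by rw [ha]; simp_rw [pow_two]
  have h11 : ∫ ω, X ω 1 * X ω 1 ∂ℙ = b := by rw [hb]; simp_rw [pow_two]
  -- generic expansion of second moments of linear combinations
  have hExpInt : ∀ p q r v : ℝ,
      Integrable (fun ω => (p * X ω 0 + q * X ω 1) * (r * X ω 0 + v * X ω 1)) ℙ := by
    intro p q r v
    have : (fun ω => (p * X ω 0 + q * X ω 1) * (r * X ω 0 + v * X ω 1)) =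
        fun ω => p * r * (X ω 0 * X ω 0) +
          ((p * v + q * r) * (X ω 0 * X ω 1) + q * v * (X ω 1 * X ω 1)) := by
      funext ω; ring
    rw [this]
    exact ((hmul 0 0).const_mul _).add (((hmul 0 1).const_mul _).add ((hmul 1 1).const_mul _))
  have hExp : ∀ p q r v : ℝ,
      ∫ ω, (p * X ω 0 + q * X ω 1) * (r * X ω 0 + v * X ω 1) ∂ℙ = p * r * a + q * v * b := by
    intro p q r v
    have h1 : (fun ω => (p * X ω 0 + q * X ω 1) * (r * X ω 0 + v * X ω 1)) =
        fun ω => p * r * (X ω 0 * X ω 0) +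
          ((p * v + q * r) * (X ω 0 * X ω 1) + q * v * (X ω 1 * X ω 1)) := by
      funext ω; ring
    have hg : Integrable (fun ω => (p * v + q * r) * (X ω 0 * X ω 1) + q * v * (X ω 1 * X ω 1)) ℙ :=
      ((hmul 0 1).const_mul _).add ((hmul 1 1).const_mul _)
    rw [h1, integral_add ((hmul 0 0).const_mul _) hg,
      integral_add ((hmul 0 1).const_mul _) ((hmul 1 1).const_mul _),
      integral_const_mul _ _, integral_const_mul _ _, integral_const_mul _ _, h00, h11, hunc]
    ring
  -- covariance of X
  have hSx : covMatrix ℙ X = !![a, 0; 0, b] := by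
    ext i j
    fin_cases i <;> fin_cases j <;>
      simp only [covMatrix, Matrix.of_apply, hm, sub_zero] <;>
      simp [h00, h11, hunc]
    · have : (fun ω => X ω 1 * X ω 0) = fun ω => X ω 0 * X ω 1 := by funext ω; ring
      rw [this, hunc]
  -- coordinates of the rotated vector
  have hY0 : ∀ ω, ((rot θ).mulVec (X ω)) 0 = c * X ω 0 + (-s) * X ω 1 := by
    intro ω
    simp [rot, Matrix.mulVec, dotProduct, Fin.sum_univ_two, hc, hs]
  have hY1 : ∀ ω, ((rot θ).mulVec (X ω)) 1 = s * X ω 0 + c * X ω 1 := by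
    intro ω
    simp [rot, Matrix.mulVec, dotProduct, Fin.sum_univ_two, hc, hs]
  have hmY : ∀ i, ∫ ω, ((rot θ).mulVec (X ω)) i ∂ℙ = 0 := by
    intro i
    fin_cases i
    · show ∫ ω, ((rot θ).mulVec (X ω)) 0 ∂ℙ = 0
      simp_rw [hY0]
      rw [integral_add ((hXiInt 0).const_mul _) ((hXiInt 1).const_mul _),
        integral_const_mul _ _, integral_const_mul _ _, hm, hm]
      ring
    · show ∫ ω, ((rot θ).mulVec (X ω)) 1 ∂ℙ = 0
      simp_rw [hY1]
      rw [integral_add ((hXiInt 0).const_mul _) ((hXiInt 1).const_mul _),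
        integral_const_mul _ _, integral_const_mul _ _, hm, hm]
      ring
  -- covariance of the rotated vector
  have hSy : covMatrix ℙ (fun ω => (WithLp.toLp 2 ((rot θ).mulVec (X ω)) : EuclideanSpace ℝ (Fin 2))) =
      !![a * c ^ 2 + b * s ^ 2, (a - b) * c * s; (a - b) * c * s, a * s ^ 2 + b * c ^ 2] := by
    ext i j
    fin_cases i <;> fin_cases j <;>
      simp only [covMatrix, Matrix.of_apply, hmY, sub_zero, Fin.mk_zero, Fin.mk_one,
        Matrix.cons_val_zero, Matrix.cons_val_one, Matrix.head_cons, Matrix.head_fin_const]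
    · have : (fun ω => ((rot θ).mulVec (X ω)) 0 * ((rot θ).mulVec (X ω)) 0) =
          fun ω => (c * X ω 0 + (-s) * X ω 1) * (c * X ω 0 + (-s) * X ω 1) := by
        funext ω; rw [hY0]
      rw [this, hExp]; ring
    · have : (fun ω => ((rot θ).mulVec (X ω)) 0 * ((rot θ).mulVec (X ω)) 1) =
          fun ω => (c * X ω 0 + (-s) * X ω 1) * (s * X ω 0 + c * X ω 1) := by
        funext ω; rw [hY0, hY1]
      rw [this, hExp]; ring
    · have : (fun ω => ((rot θ).mulVec (X ω)) 1 * ((rot θ).mulVec (X ω)) 0) =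
          fun ω => (s * X ω 0 + c * X ω 1) * (c * X ω 0 + (-s) * X ω 1) := by
        funext ω; rw [hY0, hY1]
      rw [this, hExp]; ring
    · have : (fun ω => ((rot θ).mulVec (X ω)) 1 * ((rot θ).mulVec (X ω)) 1) =
          fun ω => (s * X ω 0 + c * X ω 1) * (s * X ω 0 + c * X ω 1) := by
        funext ω; rw [hY1]
      rw [this, hExp]; ring
  -- abbreviations for the entries of the unnormalized T
  set p : ℝ := b + a * c ^ 2 + b * s ^ 2 with hp
  set q : ℝ := (a - b) * c * s with hq
  set r : ℝ := a + b * c ^ 2 + a * s ^ 2 with hr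
  have hTu : T = u⁻¹ • !![p, q; q, r] := hT
  -- algebraic identities
  have idet : p * r - q * q = D := by
    rw [hp, hq, hr, hD]; linear_combination (3*a*b + a*b*s^2 + a*b*c^2) * hss
  have itr : a * p + b * r = D := by
    rw [hp, hr, hD]; linear_combination (2*a*b) * hss
  have ifin : a * p ^ 2 + (a + b) * q ^ 2 + b * r ^ 2 = (a + b) * D := by
    rw [hp, hq, hr, hD]
    linear_combination (b^3*c^2 + a*b^2*(3+s^2) + a^2*b*(3+s^2) + a^3*c^2) * hss
  refine ⟨?_, ?_, ?_, ?_⟩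
  · -- determinant
    rw [hTu, Matrix.det_smul, Matrix.det_fin_two_of]
    have : p * r - q * q = D := idet
    have h1 : (u⁻¹) ^ (Fintype.card (Fin 2)) * (p * r - q * q) = 1 := by
      rw [idet, Fintype.card_fin, ← hu2]
      field_simp
    simpa using h1
  · -- squared matrix identity
    rw [hSx, hSy, hTu, Matrix.mul_smul, Matrix.smul_mul, Matrix.mul_smul, smul_smul]
    have hA : !![a, 0; 0, b] * !![p, q; q, r] = !![a * p, a * q; b * q, b * r] := by
      ext i j; fin_cases i <;> fin_cases j <;>
        simp [Matrix.mul_apply, Fin.sum_univ_two]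
    rw [hA]
    have hAA : !![a * p, a * q; b * q, b * r] * !![a * p, a * q; b * q, b * r] =
        D • (!![a, 0; 0, b] *
          !![a * c ^ 2 + b * s ^ 2, (a - b) * c * s; (a - b) * c * s,
            a * s ^ 2 + b * c ^ 2]) := by
      ext i j; fin_cases i <;> fin_cases j <;>
        simp [Matrix.mul_apply, Fin.sum_univ_two, hp, hq, hr, hD]
      · linear_combination (a^2*b^2*(s^2 - c^2 - 1) + 2*a^3*b*c^2) * hss
      · linear_combination (2*a^2*b*(a-b)*c*s) * hss
      · linear_combination (2*a*b^2*(a-b)*c*s) * hss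
      · linear_combination (2*a*b^3*c^2 + a^2*b^2*(s^2 - c^2 - 1)) * hss
    rw [hAA, smul_smul]
    have : u⁻¹ * u⁻¹ * D = 1 := by rw [← hu2]; field_simp
    rw [this, one_smul]
  · -- trace
    rw [hSx, hTu, Matrix.mul_smul, Matrix.trace_smul]
    have hA : !![a, 0; 0, b] * !![p, q; q, r] = !![a * p, a * q; b * q, b * r] := by
      ext i j; fin_cases i <;> fin_cases j <;>
        simp [Matrix.mul_apply, Fin.sum_univ_two]
    rw [hA]
    have htr2 : (!![a * p, a * q; b * q, b * r]).trace = D := by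
      rw [Matrix.trace_fin_two]; simpa using itr
    rw [htr2, smul_eq_mul]
    have : u⁻¹ * D = u := by rw [← hu2]; field_simp
    rw [this]; exact hu0
  · -- the expected squared distance
    have hnorm : ∀ v : EuclideanSpace ℝ (Fin 2), ‖v‖ ^ 2 = v 0 ^ 2 + v 1 ^ 2 := by
      intro v
      rw [EuclideanSpace.norm_eq, Real.sq_sqrt (by positivity)]
      simp [Fin.sum_univ_two, sq_abs]
    have hfun : (fun ω => ‖(show EuclideanSpace ℝ (Fin 2) from WithLp.toLp 2 (T.mulVec (X ω))) - X ω‖ ^ 2) =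
        fun ω => ((u⁻¹ * p - 1) * X ω 0 + (u⁻¹ * q) * X ω 1) *
            ((u⁻¹ * p - 1) * X ω 0 + (u⁻¹ * q) * X ω 1) +
          ((u⁻¹ * q) * X ω 0 + (u⁻¹ * r - 1) * X ω 1) *
            ((u⁻¹ * q) * X ω 0 + (u⁻¹ * r - 1) * X ω 1) := by
      funext ω
      rw [hnorm]
      have e0 : ((show EuclideanSpace ℝ (Fin 2) from WithLp.toLp 2 (T.mulVec (X ω))) - X ω) 0 =
          (u⁻¹ * p - 1) * X ω 0 + (u⁻¹ * q) * X ω 1 := by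
        simp [hTu, Matrix.mulVec, dotProduct, Fin.sum_univ_two]
        ring
      have e1 : ((show EuclideanSpace ℝ (Fin 2) from WithLp.toLp 2 (T.mulVec (X ω))) - X ω) 1 =
          (u⁻¹ * q) * X ω 0 + (u⁻¹ * r - 1) * X ω 1 := by
        simp [hTu, Matrix.mulVec, dotProduct, Fin.sum_univ_two]
        ring
      rw [e0, e1]; ring
    rw [hfun, integral_add (hExpInt _ _ _ _) (hExpInt _ _ _ _), hExp, hExp]
    have key : (u⁻¹ * p - 1) * (u⁻¹ * p - 1) * a + u⁻¹ * q * (u⁻¹ * q) * b +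
        (u⁻¹ * q * (u⁻¹ * q) * a + (u⁻¹ * r - 1) * (u⁻¹ * r - 1) * b) =
        2 * (a + b) - 2 * u := by
      have h1 : u⁻¹ ^ 2 * D = 1 := by rw [← hu2]; field_simp
      have h2 : u⁻¹ * D = u := by rw [← hu2]; field_simp
      calc (u⁻¹ * p - 1) * (u⁻¹ * p - 1) * a + u⁻¹ * q * (u⁻¹ * q) * b +
          (u⁻¹ * q * (u⁻¹ * q) * a + (u⁻¹ * r - 1) * (u⁻¹ * r - 1) * b) =
          u⁻¹ ^ 2 * (a * p ^ 2 + (a + b) * q ^ 2 + b * r ^ 2) - 2 * (u⁻¹ * (a * p + b * r)) +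
            (a + b) := by ring
        _ = (a + b) * (u⁻¹ ^ 2 * D) - 2 * (u⁻¹ * D) + (a + b) := by rw [ifin, itr]; ring
        _ = 2 * (a + b) - 2 * u := by rw [h1, h2]; ring
    rw [key]
end

section
/- Let X = (X_1, X_2) be a square-integrable random vector on a probability space (Ω, ℙ) with values in ℝ², let α ∈ ℝ², let λ_1, λ_2 > 0, and let θ ∈ ℝ. Define S_λ X = (λ_1 X_1, λ_2 X_2) and Z = α + R_θ(S_λ X). Then (𝔼‖Z − X‖²)^{1/2} ≤ ‖α‖ + ((λ_1 − 1)²𝔼[X_1²] + (λ_2 − 1)²𝔼[X_2²])^{1/2} + { 2(λ_1²𝔼[X_1]² + λ_2²𝔼[X_2]²)(1 − cos θ) + 2(λ_1²Var[X_1] + λ_2²Var[X_2]) + 2[ ((λ_1²Var[X_1] − λ_2²Var[X_2])² + 4λ_1²λ_2²·Cov(X_1,X_2)²)·cos²θ + 4λ_1²λ_2²(Var[X_1]·Var[X_2] − Cov(X_1,X_2)²) ]^{1/2} }^{1/2}. In particular, the quadratic Wasserstein distance between the laws of Z and X is bounded above by the right-hand side. -/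
open MeasureTheory Matrix Real

section Aux

variable {Ω : Type*} [MeasurableSpace Ω] (ℙ : Measure Ω) [IsProbabilityMeasure ℙ]

lemma cs_aux {f g : Ω → ℝ} (hf : MemLp f 2 ℙ) (hg : MemLp g 2 ℙ) :
    ∫ ω, f ω * g ω ∂ℙ ≤ Real.sqrt (∫ ω, f ω ^ 2 ∂ℙ) * Real.sqrt (∫ ω, g ω ^ 2 ∂ℙ) := by
  have hFn : ∀ (f : Ω → ℝ) (hf : MemLp f 2 ℙ),
      ‖hf.toLp f‖ = Real.sqrt (∫ ω, f ω ^ 2 ∂ℙ) := by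
    intro f hf
    have : ∫ ω, f ω ^ 2 ∂ℙ = ‖hf.toLp f‖ ^ 2 := by
      rw [← real_inner_self_eq_norm_sq, MeasureTheory.L2.inner_def]
      refine integral_congr_ae ?_
      filter_upwards [hf.coeFn_toLp] with ω h1
      simp [h1, sq]
    rw [this, Real.sqrt_sq (norm_nonneg _)]
  have h1 : ∫ ω, f ω * g ω ∂ℙ = (inner ℝ (hf.toLp f) (hg.toLp g) : ℝ) := by
    rw [MeasureTheory.L2.inner_def]
    refine integral_congr_ae ?_
    filter_upwards [hf.coeFn_toLp, hg.coeFn_toLp] with ω ha hb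
    simp [ha, hb, mul_comm]
  rw [h1, ← hFn f hf, ← hFn g hg]
  exact real_inner_le_norm _ _

lemma minkowski_aux {E : Type*} [NormedAddCommGroup E] {f g : Ω → E}
    (hf : MemLp f 2 ℙ) (hg : MemLp g 2 ℙ) :
    Real.sqrt (∫ ω, ‖f ω + g ω‖ ^ 2 ∂ℙ) ≤
      Real.sqrt (∫ ω, ‖f ω‖ ^ 2 ∂ℙ) + Real.sqrt (∫ ω, ‖g ω‖ ^ 2 ∂ℙ) := by
  set a := Real.sqrt (∫ ω, ‖f ω‖ ^ 2 ∂ℙ) with ha'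
  set b := Real.sqrt (∫ ω, ‖g ω‖ ^ 2 ∂ℙ) with hb'
  have ha : 0 ≤ a := Real.sqrt_nonneg _
  have hb : 0 ≤ b := Real.sqrt_nonneg _
  have hif : Integrable (fun ω => ‖f ω‖ ^ 2) ℙ := hf.norm.integrable_sq
  have hig : Integrable (fun ω => ‖g ω‖ ^ 2) ℙ := hg.norm.integrable_sq
  have hifg : Integrable (fun ω => ‖f ω‖ * ‖g ω‖) ℙ := by
    refine (hif.add hig).mono' (hf.norm.aestronglyMeasurable.mul hg.norm.aestronglyMeasurable) ?_
    filter_upwards with ω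
    simp only [Pi.add_apply]
    have h1 : (0:ℝ) ≤ ‖f ω‖ := norm_nonneg _
    have h2 : (0:ℝ) ≤ ‖g ω‖ := norm_nonneg _
    rw [Real.norm_of_nonneg (by positivity)]
    nlinarith [sq_nonneg (‖f ω‖ - ‖g ω‖)]
  have hcs : ∫ ω, ‖f ω‖ * ‖g ω‖ ∂ℙ ≤ a * b := cs_aux ℙ hf.norm hg.norm
  have ha2 : a ^ 2 = ∫ ω, ‖f ω‖ ^ 2 ∂ℙ :=
    Real.sq_sqrt (integral_nonneg fun ω => by positivity)
  have hb2 : b ^ 2 = ∫ ω, ‖g ω‖ ^ 2 ∂ℙ :=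
    Real.sq_sqrt (integral_nonneg fun ω => by positivity)
  have key : ∫ ω, ‖f ω + g ω‖ ^ 2 ∂ℙ ≤ (a + b) ^ 2 := by
    have step1 : ∫ ω, ‖f ω + g ω‖ ^ 2 ∂ℙ ≤
        ∫ ω, (‖f ω‖ ^ 2 + (2 * (‖f ω‖ * ‖g ω‖) + ‖g ω‖ ^ 2)) ∂ℙ := by
      refine integral_mono ((hf.add hg).norm.integrable_sq) ?_ ?_
      · exact hif.add ((hifg.const_mul 2).add hig)
      · intro ω
        have h0 := norm_add_le (f ω) (g ω)
        have h1 : (0:ℝ) ≤ ‖f ω‖ := norm_nonneg _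
        have h2 : (0:ℝ) ≤ ‖g ω‖ := norm_nonneg _
        simp only
        nlinarith [norm_nonneg (f ω + g ω)]
    have step2 : ∫ ω, (‖f ω‖ ^ 2 + (2 * (‖f ω‖ * ‖g ω‖) + ‖g ω‖ ^ 2)) ∂ℙ =
        (∫ ω, ‖f ω‖ ^ 2 ∂ℙ) + (2 * (∫ ω, ‖f ω‖ * ‖g ω‖ ∂ℙ) + ∫ ω, ‖g ω‖ ^ 2 ∂ℙ) := by
      rw [integral_add (f := fun ω => ‖f ω‖ ^ 2)
          (g := fun ω => 2 * (‖f ω‖ * ‖g ω‖) + ‖g ω‖ ^ 2) hif ((hifg.const_mul 2).add hig),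
        integral_add (f := fun ω => 2 * (‖f ω‖ * ‖g ω‖)) (g := fun ω => ‖g ω‖ ^ 2)
          (hifg.const_mul 2) hig, integral_const_mul]
    calc ∫ ω, ‖f ω + g ω‖ ^ 2 ∂ℙ ≤ _ := step1
      _ = _ := step2
      _ ≤ a ^ 2 + (2 * (a * b) + b ^ 2) := by rw [ha2, hb2]; gcongr
      _ = (a + b) ^ 2 := by ring
  calc Real.sqrt (∫ ω, ‖f ω + g ω‖ ^ 2 ∂ℙ) ≤ Real.sqrt ((a + b) ^ 2) :=
        Real.sqrt_le_sqrt key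
    _ = a + b := Real.sqrt_sq (by positivity)

lemma pair_memℒp {a b : Ω → ℝ} (ha : MemLp a 2 ℙ) (hb : MemLp b 2 ℙ) :
    MemLp (fun ω => (show EuclideanSpace ℝ (Fin 2) from WithLp.toLp 2 ![a ω, b ω])) 2 ℙ := by
  have h0 : MemLp (fun ω => a ω • (EuclideanSpace.single 0 (1:ℝ) : EuclideanSpace ℝ (Fin 2))) 2 ℙ :=
    (ContinuousLinearMap.toSpanSingleton ℝ _).comp_memLp' ha
  have h1 : MemLp (fun ω => b ω • (EuclideanSpace.single 1 (1:ℝ) : EuclideanSpace ℝ (Fin 2))) 2 ℙ :=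
    (ContinuousLinearMap.toSpanSingleton ℝ _).comp_memLp' hb
  have heq : (fun ω => (show EuclideanSpace ℝ (Fin 2) from WithLp.toLp 2 ![a ω, b ω])) =
      (fun ω => a ω • (EuclideanSpace.single 0 (1:ℝ) : EuclideanSpace ℝ (Fin 2)) +
        b ω • (EuclideanSpace.single 1 (1:ℝ) : EuclideanSpace ℝ (Fin 2))) := by
    funext ω
    refine PiLp.ext fun i => ?_
    fin_cases i <;>
      simp [PiLp.add_apply, PiLp.smul_apply, EuclideanSpace.single_apply]
  rw [heq]
  exact h0.add h1

lemma norm_sq_pair (u v : ℝ) :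
    ‖(show EuclideanSpace ℝ (Fin 2) from WithLp.toLp 2 ![u, v])‖ ^ 2 = u ^ 2 + v ^ 2 := by
  rw [EuclideanSpace.norm_eq, Real.sq_sqrt (by positivity)]
  simp [Fin.sum_univ_two, sq_abs]

end Aux

set_option maxHeartbeats 1000000 in
/-- upper bound for compositions of scaling, rotation, translation.
Let `X = (X₁, X₂)` be square-integrable in `ℝ²`, `α ∈ ℝ²`, `l₁, l₂ > 0`, `θ ∈ ℝ`, and set
`Z = α + R_θ(S_λ X)` where `S_λ X = (l₁X₁, l₂X₂)`.  Then `(𝔼‖Z − X‖²)^{1/2}` is at most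
`‖α‖ + ((l₁−1)²𝔼[X₁²] + (l₂−1)²𝔼[X₂²])^{1/2} + {2(l₁²𝔼[X₁]² + l₂²𝔼[X₂]²)(1 − cos θ)`
`+ 2(l₁²Var X₁ + l₂²Var X₂) + 2[((l₁²Var X₁ − l₂²Var X₂)² + 4l₁²l₂²Cov(X₁,X₂)²)cos²θ`
`+ 4l₁²l₂²(Var X₁·Var X₂ − Cov(X₁,X₂)²)]^{1/2}}^{1/2}`, and in particular this also bounds
the quadratic Wasserstein distance between the laws of `Z` and `X`. -/
theorem stmt_15 {Ω : Type*} [MeasurableSpace Ω] (ℙ : Measure Ω) [IsProbabilityMeasure ℙ]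
    (X : Ω → EuclideanSpace ℝ (Fin 2)) (hX : MemLp X 2 ℙ)
    (α : EuclideanSpace ℝ (Fin 2)) (l₁ l₂ : ℝ) (hl₁ : 0 < l₁) (hl₂ : 0 < l₂) (θ : ℝ)
    (m₁ m₂ v₁ v₂ c : ℝ)
    (hm₁ : m₁ = ∫ ω, X ω 0 ∂ℙ) (hm₂ : m₂ = ∫ ω, X ω 1 ∂ℙ)
    (hv₁ : v₁ = (∫ ω, (X ω 0) ^ 2 ∂ℙ) - m₁ ^ 2) (hv₂ : v₂ = (∫ ω, (X ω 1) ^ 2 ∂ℙ) - m₂ ^ 2)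
    (hc : c = ∫ ω, (X ω 0 - m₁) * (X ω 1 - m₂) ∂ℙ)
    (Z : Ω → EuclideanSpace ℝ (Fin 2))
    (hZ : Z = fun ω =>
      α + (show EuclideanSpace ℝ (Fin 2) from
        WithLp.toLp 2 ((rot θ).mulVec ![l₁ * X ω 0, l₂ * X ω 1]))) :
    Real.sqrt (∫ ω, ‖Z ω - X ω‖ ^ 2 ∂ℙ) ≤
      ‖α‖ +
        Real.sqrt ((l₁ - 1) ^ 2 * (∫ ω, (X ω 0) ^ 2 ∂ℙ) +
          (l₂ - 1) ^ 2 * (∫ ω, (X ω 1) ^ 2 ∂ℙ)) +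
        Real.sqrt (2 * (l₁ ^ 2 * m₁ ^ 2 + l₂ ^ 2 * m₂ ^ 2) * (1 - Real.cos θ) +
          2 * (l₁ ^ 2 * v₁ + l₂ ^ 2 * v₂) +
          2 * Real.sqrt (((l₁ ^ 2 * v₁ - l₂ ^ 2 * v₂) ^ 2 +
              4 * l₁ ^ 2 * l₂ ^ 2 * c ^ 2) * Real.cos θ ^ 2 +
            4 * l₁ ^ 2 * l₂ ^ 2 * (v₁ * v₂ - c ^ 2))) := by
  have hX0 : MemLp (fun ω => X ω 0) 2 ℙ :=
    (EuclideanSpace.proj (0 : Fin 2) (𝕜 := ℝ)).comp_memLp' hX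
  have hX1 : MemLp (fun ω => X ω 1) 2 ℙ :=
    (EuclideanSpace.proj (1 : Fin 2) (𝕜 := ℝ)).comp_memLp' hX
  have iX0sq : Integrable (fun ω => (X ω 0) ^ 2) ℙ := hX0.integrable_sq
  have iX1sq : Integrable (fun ω => (X ω 1) ^ 2) ℙ := hX1.integrable_sq
  have iX0 : Integrable (fun ω => X ω 0) ℙ := hX0.integrable one_le_two
  have iX1 : Integrable (fun ω => X ω 1) ℙ := hX1.integrable one_le_two
  -- the three pieces
  set fB : Ω → EuclideanSpace ℝ (Fin 2) := fun ω =>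
    (show EuclideanSpace ℝ (Fin 2) from WithLp.toLp 2 ![(l₁ - 1) * X ω 0, (l₂ - 1) * X ω 1]) with hfB
  set fC : Ω → EuclideanSpace ℝ (Fin 2) := fun ω =>
    (show EuclideanSpace ℝ (Fin 2) from WithLp.toLp 2
      ![(Real.cos θ - 1) * (l₁ * X ω 0) - Real.sin θ * (l₂ * X ω 1),
        Real.sin θ * (l₁ * X ω 0) + (Real.cos θ - 1) * (l₂ * X ω 1)]) with hfC
  have memB : MemLp fB 2 ℙ := pair_memℒp ℙ (hX0.const_mul _) (hX1.const_mul _)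
  have memC : MemLp fC 2 ℙ :=
    pair_memℒp ℙ (((hX0.const_mul l₁).const_mul _).sub ((hX1.const_mul l₂).const_mul _))
      (((hX0.const_mul l₁).const_mul _).add ((hX1.const_mul l₂).const_mul _))
  have memBC : MemLp (fun ω => fB ω + fC ω) 2 ℙ := by exact memB.add memC
  have hdecomp : ∀ ω, Z ω - X ω = α + (fB ω + fC ω) := by
    intro ω
    rw [hZ]
    refine PiLp.ext fun i => ?_
    fin_cases i <;>
      simp [rot, hfB, hfC, Matrix.mulVec, dotProduct, Fin.sum_univ_two,
        PiLp.add_apply, PiLp.sub_apply] <;> ring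
  have hint : ∫ ω, ‖Z ω - X ω‖ ^ 2 ∂ℙ = ∫ ω, ‖α + (fB ω + fC ω)‖ ^ 2 ∂ℙ :=
    integral_congr_ae (Filter.Eventually.of_forall fun ω =>
      show ‖Z ω - X ω‖ ^ 2 = ‖α + (fB ω + fC ω)‖ ^ 2 by rw [hdecomp ω])
  have h1 : Real.sqrt (∫ ω, ‖α + (fB ω + fC ω)‖ ^ 2 ∂ℙ) ≤
      Real.sqrt (∫ (_ : Ω), ‖α‖ ^ 2 ∂ℙ) + Real.sqrt (∫ ω, ‖fB ω + fC ω‖ ^ 2 ∂ℙ) :=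
    minkowski_aux ℙ (memLp_const α) memBC
  have h2 : Real.sqrt (∫ ω, ‖fB ω + fC ω‖ ^ 2 ∂ℙ) ≤
      Real.sqrt (∫ ω, ‖fB ω‖ ^ 2 ∂ℙ) + Real.sqrt (∫ ω, ‖fC ω‖ ^ 2 ∂ℙ) :=
    minkowski_aux ℙ memB memC
  have hα : Real.sqrt (∫ (_ : Ω), ‖α‖ ^ 2 ∂ℙ) = ‖α‖ := by
    simp [integral_const, measure_univ, Real.sqrt_sq (norm_nonneg α)]
  have hIB : ∫ ω, ‖fB ω‖ ^ 2 ∂ℙ =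
      (l₁ - 1) ^ 2 * (∫ ω, (X ω 0) ^ 2 ∂ℙ) + (l₂ - 1) ^ 2 * (∫ ω, (X ω 1) ^ 2 ∂ℙ) := by
    have hpt : ∀ ω, ‖fB ω‖ ^ 2 = (l₁ - 1) ^ 2 * (X ω 0) ^ 2 + (l₂ - 1) ^ 2 * (X ω 1) ^ 2 := by
      intro ω; rw [hfB]; rw [norm_sq_pair]; ring
    rw [integral_congr_ae (Filter.Eventually.of_forall fun ω => hpt ω),
      integral_add (iX0sq.const_mul _) (iX1sq.const_mul _), integral_const_mul, integral_const_mul]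
  have hIC : ∫ ω, ‖fC ω‖ ^ 2 ∂ℙ =
      (2 - 2 * Real.cos θ) * l₁ ^ 2 * (∫ ω, (X ω 0) ^ 2 ∂ℙ) +
        (2 - 2 * Real.cos θ) * l₂ ^ 2 * (∫ ω, (X ω 1) ^ 2 ∂ℙ) := by
    have hpt : ∀ ω, ‖fC ω‖ ^ 2 =
        (2 - 2 * Real.cos θ) * l₁ ^ 2 * (X ω 0) ^ 2 +
          (2 - 2 * Real.cos θ) * l₂ ^ 2 * (X ω 1) ^ 2 := by
      intro ω; rw [hfC]; rw [norm_sq_pair]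
      linear_combination ((l₁ * X ω 0) ^ 2 + (l₂ * X ω 1) ^ 2) * (Real.sin_sq_add_cos_sq θ)
    rw [integral_congr_ae (Filter.Eventually.of_forall fun ω => hpt ω),
      integral_add (iX0sq.const_mul _) (iX1sq.const_mul _), integral_const_mul, integral_const_mul]
  -- variance facts
  have hv₁' : ∫ ω, (X ω 0 - m₁) ^ 2 ∂ℙ = v₁ := by
    have hpt : ∀ ω, (X ω 0 - m₁) ^ 2 = ((X ω 0) ^ 2 - 2 * m₁ * X ω 0) + m₁ ^ 2 := by
      intro ω; ring
    rw [integral_congr_ae (Filter.Eventually.of_forall fun ω => hpt ω),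
      integral_add (f := fun ω => (X ω 0) ^ 2 - 2 * m₁ * X ω 0) (g := fun _ => m₁ ^ 2)
        (by exact iX0sq.sub (iX0.const_mul (2 * m₁))) (integrable_const _),
      integral_sub (f := fun ω => (X ω 0) ^ 2) (g := fun ω => 2 * m₁ * X ω 0)
        iX0sq (iX0.const_mul (2 * m₁)), integral_const_mul, integral_const]
    simp [measure_univ, hv₁, hm₁]
    ring
  have hv₂' : ∫ ω, (X ω 1 - m₂) ^ 2 ∂ℙ = v₂ := by
    have hpt : ∀ ω, (X ω 1 - m₂) ^ 2 = ((X ω 1) ^ 2 - 2 * m₂ * X ω 1) + m₂ ^ 2 := by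
      intro ω; ring
    rw [integral_congr_ae (Filter.Eventually.of_forall fun ω => hpt ω),
      integral_add (f := fun ω => (X ω 1) ^ 2 - 2 * m₂ * X ω 1) (g := fun _ => m₂ ^ 2)
        (by exact iX1sq.sub (iX1.const_mul (2 * m₂))) (integrable_const _),
      integral_sub (f := fun ω => (X ω 1) ^ 2) (g := fun ω => 2 * m₂ * X ω 1)
        iX1sq (iX1.const_mul (2 * m₂)), integral_const_mul, integral_const]
    simp [measure_univ, hv₂, hm₂]
    ring
  have hv₁0 : 0 ≤ v₁ := hv₁' ▸ integral_nonneg fun ω => sq_nonneg _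
  have hv₂0 : 0 ≤ v₂ := hv₂' ▸ integral_nonneg fun ω => sq_nonneg _
  have hf : MemLp (fun ω => X ω 0 - m₁) 2 ℙ := hX0.sub (memLp_const m₁)
  have hg : MemLp (fun ω => X ω 1 - m₂) 2 ℙ := hX1.sub (memLp_const m₂)
  have hf' : MemLp (fun ω => m₁ - X ω 0) 2 ℙ := (memLp_const m₁).sub hX0
  have hcs1 : c ≤ Real.sqrt v₁ * Real.sqrt v₂ := by
    have := cs_aux ℙ hf hg
    rw [hv₁', hv₂'] at this
    rw [hc]; exact this
  have hcs2 : -c ≤ Real.sqrt v₁ * Real.sqrt v₂ := by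
    have := cs_aux ℙ hf' hg
    have e1 : ∫ ω, (m₁ - X ω 0) * (X ω 1 - m₂) ∂ℙ = -c := by
      rw [hc, ← integral_neg]
      exact integral_congr_ae (Filter.Eventually.of_forall fun ω => by ring)
    have e2 : ∫ ω, (m₁ - X ω 0) ^ 2 ∂ℙ = v₁ := by
      rw [← hv₁']
      exact integral_congr_ae (Filter.Eventually.of_forall fun ω => by ring)
    rw [e1, e2, hv₂'] at this
    exact this
  have hcsq : c ^ 2 ≤ v₁ * v₂ := by
    nlinarith [hcs1, hcs2, Real.sq_sqrt hv₁0, Real.sq_sqrt hv₂0,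
      Real.sqrt_nonneg v₁, Real.sqrt_nonneg v₂]
  -- the key scalar inequality for the third term
  set V : ℝ := l₁ ^ 2 * v₁ + l₂ ^ 2 * v₂ with hV
  set D : ℝ := ((l₁ ^ 2 * v₁ - l₂ ^ 2 * v₂) ^ 2 + 4 * l₁ ^ 2 * l₂ ^ 2 * c ^ 2) * Real.cos θ ^ 2 +
      4 * l₁ ^ 2 * l₂ ^ 2 * (v₁ * v₂ - c ^ 2) with hD
  have hDid : D = (Real.cos θ * V) ^ 2 +
      4 * l₁ ^ 2 * l₂ ^ 2 * (v₁ * v₂ - c ^ 2) * Real.sin θ ^ 2 := by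
    rw [hD, hV]
    linear_combination (-(4 * l₁ ^ 2 * l₂ ^ 2 * (v₁ * v₂ - c ^ 2))) * (Real.sin_sq_add_cos_sq θ)
  have hkey : -(Real.cos θ) * V ≤ Real.sqrt D := by
    rcases le_or_gt (-(Real.cos θ) * V) 0 with h | h
    · exact h.trans (Real.sqrt_nonneg _)
    · have hsq : (-(Real.cos θ) * V) ^ 2 ≤ D := by
        rw [hDid]
        nlinarith [mul_nonneg (mul_nonneg (by positivity : (0:ℝ) ≤ 4 * l₁ ^ 2 * l₂ ^ 2)
          (sub_nonneg.2 hcsq)) (sq_nonneg (Real.sin θ))]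
      calc -(Real.cos θ) * V = Real.sqrt ((-(Real.cos θ) * V) ^ 2) :=
            (Real.sqrt_sq h.le).symm
        _ ≤ Real.sqrt D := Real.sqrt_le_sqrt hsq
  have hICle : ∫ ω, ‖fC ω‖ ^ 2 ∂ℙ ≤
      2 * (l₁ ^ 2 * m₁ ^ 2 + l₂ ^ 2 * m₂ ^ 2) * (1 - Real.cos θ) +
        2 * (l₁ ^ 2 * v₁ + l₂ ^ 2 * v₂) + 2 * Real.sqrt D := by
    have hI0 : ∫ ω, (X ω 0) ^ 2 ∂ℙ = v₁ + m₁ ^ 2 := by rw [hv₁]; ring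
    have hI1 : ∫ ω, (X ω 1) ^ 2 ∂ℙ = v₂ + m₂ ^ 2 := by rw [hv₂]; ring
    have hkey' : -(Real.cos θ) * (l₁ ^ 2 * v₁ + l₂ ^ 2 * v₂) ≤ Real.sqrt D := by
      rw [← hV]; exact hkey
    rw [hIC, hI0, hI1]
    nlinarith [hkey']
  calc Real.sqrt (∫ ω, ‖Z ω - X ω‖ ^ 2 ∂ℙ)
      = Real.sqrt (∫ ω, ‖α + (fB ω + fC ω)‖ ^ 2 ∂ℙ) := by rw [hint]
    _ ≤ Real.sqrt (∫ (_ : Ω), ‖α‖ ^ 2 ∂ℙ) + Real.sqrt (∫ ω, ‖fB ω + fC ω‖ ^ 2 ∂ℙ) := h1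
    _ ≤ ‖α‖ + (Real.sqrt (∫ ω, ‖fB ω‖ ^ 2 ∂ℙ) + Real.sqrt (∫ ω, ‖fC ω‖ ^ 2 ∂ℙ)) := by
        rw [hα]; exact add_le_add (le_refl _) h2
    _ ≤ _ := by
        rw [hIB, ← add_assoc]
        gcongr
end

section
/- Let μ be the uniform probability measure on the unit square [0,1] × [0,1] ⊂ ℝ², let θ, φ ∈ ℝ, and let U, V be square-integrable random vectors on a probability space (Ω', ℙ') with values in ℝ² whose laws satisfy U_#ℙ' = (R_θ)_#μ and V_#ℙ' = (R_φ)_#μ. Then 𝔼‖U − V‖² ≥ 1 − cos(θ − φ). Consequently the squared quadratic Wasserstein distance between the rotated measures (R_θ)_#μ and (R_φ)_#μ is at least 1 − cos(θ − φ). -/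
open MeasureTheory Matrix Real

/-- The uniform probability measure on the unit square `[0,1] × [0,1] ⊆ ℝ²`
(the restriction of two-dimensional Lebesgue measure to the unit square). -/
noncomputable def unifSquare : Measure (EuclideanSpace ℝ (Fin 2)) :=
  volume.restrict {x : EuclideanSpace ℝ (Fin 2) | x 0 ∈ Set.Icc (0 : ℝ) 1 ∧ x 1 ∈ Set.Icc (0 : ℝ) 1}

noncomputable def rotCLM (θ : ℝ) : EuclideanSpace ℝ (Fin 2) →L[ℝ] EuclideanSpace ℝ (Fin 2) :=
  LinearMap.toContinuousLinearMap
    (Matrix.toEuclideanLin (rot θ) : EuclideanSpace ℝ (Fin 2) →ₗ[ℝ] EuclideanSpace ℝ (Fin 2))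

example (θ : ℝ) : (fun x => (WithLp.toLp 2 ((rot θ).mulVec (WithLp.ofLp x)) : EuclideanSpace ℝ (Fin 2))) = ⇑(rotCLM θ) := rfl

noncomputable def sqEquiv : EuclideanSpace ℝ (Fin 2) ≃ᵐ ℝ × ℝ :=
  (MeasurableEquiv.toLp 2 (Fin 2 → ℝ)).symm.trans MeasurableEquiv.finTwoArrow

lemma sqEquiv_mp : MeasurePreserving sqEquiv volume volume :=
  (volume_preserving_finTwoArrow ℝ).comp (EuclideanSpace.volume_preserving_symm_measurableEquiv_toLp (Fin 2))

lemma sqEquiv_apply (x : EuclideanSpace ℝ (Fin 2)) : sqEquiv x = (x 0, x 1) := rfl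

def sqSet : Set (EuclideanSpace ℝ (Fin 2)) :=
  {x : EuclideanSpace ℝ (Fin 2) | x 0 ∈ Set.Icc (0 : ℝ) 1 ∧ x 1 ∈ Set.Icc (0 : ℝ) 1}

lemma sqSet_preimage : sqSet = sqEquiv ⁻¹' (Set.Icc (0:ℝ) 1 ×ˢ Set.Icc (0:ℝ) 1) := rfl

lemma integral_Icc_id : ∫ x in Set.Icc (0:ℝ) 1, x = 1/2 := by
  rw [MeasureTheory.integral_Icc_eq_integral_Ioc,
    ← intervalIntegral.integral_of_le (by norm_num : (0:ℝ) ≤ 1), integral_id]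
  norm_num

lemma integral_Icc_one : ∫ _x in Set.Icc (0:ℝ) 1, (1:ℝ) = 1 := by
  simp [Real.volume_Icc]

lemma mean_prod_fst : ∫ p in Set.Icc (0:ℝ) 1 ×ˢ Set.Icc (0:ℝ) 1, p.1 = 1/2 := by
  have := MeasureTheory.setIntegral_prod_mul (μ := volume) (ν := volume) (id : ℝ → ℝ)
    (fun _ => (1:ℝ)) (Set.Icc (0:ℝ) 1) (Set.Icc (0:ℝ) 1)
  simp only [id, mul_one] at this
  rw [Measure.volume_eq_prod, this, integral_Icc_id, integral_Icc_one]
  norm_num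

lemma mean_prod_snd : ∫ p in Set.Icc (0:ℝ) 1 ×ˢ Set.Icc (0:ℝ) 1, p.2 = 1/2 := by
  have := MeasureTheory.setIntegral_prod_mul (μ := volume) (ν := volume)
    (fun _ => (1:ℝ)) (id : ℝ → ℝ) (Set.Icc (0:ℝ) 1) (Set.Icc (0:ℝ) 1)
  simp only [id, one_mul] at this
  rw [Measure.volume_eq_prod, this, integral_Icc_id, integral_Icc_one]
  norm_num

lemma mean_unifSquare (i : Fin 2) : ∫ x, x i ∂unifSquare = 1/2 := by
  have hemb : MeasurableEmbedding (sqEquiv : EuclideanSpace ℝ (Fin 2) → ℝ × ℝ) :=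
    sqEquiv.measurableEmbedding
  show ∫ x in sqSet, x i ∂volume = 1/2
  fin_cases i
  · have := sqEquiv_mp.setIntegral_preimage_emb hemb (fun p => p.1)
      (Set.Icc (0:ℝ) 1 ×ˢ Set.Icc (0:ℝ) 1)
    rw [sqSet_preimage]
    simpa [sqEquiv_apply] using this.trans mean_prod_fst
  · have := sqEquiv_mp.setIntegral_preimage_emb hemb (fun p => p.2)
      (Set.Icc (0:ℝ) 1 ×ˢ Set.Icc (0:ℝ) 1)
    rw [sqSet_preimage]
    simpa [sqEquiv_apply] using this.trans mean_prod_snd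

lemma sqSet_measurable : MeasurableSet sqSet := by
  rw [sqSet_preimage]
  exact sqEquiv.measurable (measurableSet_Icc.prod measurableSet_Icc)

lemma volume_sqSet : volume sqSet = 1 := by
  rw [sqSet_preimage, sqEquiv_mp.measure_preimage
    (measurableSet_Icc.prod measurableSet_Icc).nullMeasurableSet]
  rw [Measure.volume_eq_prod, Measure.prod_prod]
  simp [Real.volume_Icc]

instance : IsProbabilityMeasure unifSquare :=
  ⟨by rw [unifSquare, Measure.restrict_apply MeasurableSet.univ, Set.univ_inter]
      exact volume_sqSet⟩

lemma integrable_id_unifSquare : Integrable (id : EuclideanSpace ℝ (Fin 2) → _) unifSquare := by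
  show IntegrableOn id sqSet volume
  apply Measure.integrableOn_of_bounded (M := Real.sqrt 2)
  · rw [volume_sqSet]; norm_num
  · exact aestronglyMeasurable_id
  · filter_upwards [ae_restrict_mem sqSet_measurable] with x hx
    obtain ⟨⟨h00, h01⟩, h10, h11⟩ := hx
    rw [id, EuclideanSpace.norm_eq]
    apply Real.sqrt_le_sqrt
    rw [Fin.sum_univ_two]
    simp only [Real.norm_eq_abs, sq_abs]
    nlinarith

noncomputable def msq : EuclideanSpace ℝ (Fin 2) := WithLp.toLp 2 (fun _ => (1/2 : ℝ))

lemma mean_vec_unifSquare : ∫ x, x ∂unifSquare = msq := by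
  ext i
  have := (EuclideanSpace.proj i : EuclideanSpace ℝ (Fin 2) →L[ℝ] ℝ).integral_comp_comm
    integrable_id_unifSquare
  simp only [id, PiLp.proj_apply] at this
  have h2 : (∫ x, x ∂unifSquare) i = ∫ x, x i ∂unifSquare := this.symm
  rw [show msq i = 1/2 from rfl, h2, mean_unifSquare]

lemma mean_rot (θ : ℝ) {Ω' : Type*} [MeasurableSpace Ω'] (ℙ' : Measure Ω')
    (U : Ω' → EuclideanSpace ℝ (Fin 2)) (hU : MemLp U 2 ℙ')
    (hlawU : Measure.map U ℙ' =
      Measure.map (fun x => (WithLp.toLp 2 ((rot θ).mulVec (WithLp.ofLp x)) : EuclideanSpace ℝ (Fin 2))) unifSquare) :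
    ∫ ω, U ω ∂ℙ' = rotCLM θ msq := by
  have h1 : ∫ y, y ∂(Measure.map U ℙ') = ∫ ω, U ω ∂ℙ' :=
    integral_map hU.aestronglyMeasurable.aemeasurable aestronglyMeasurable_id
  rw [hlawU, show (fun x => (WithLp.toLp 2 ((rot θ).mulVec (WithLp.ofLp x)) : EuclideanSpace ℝ (Fin 2))) = ⇑(rotCLM θ) from rfl]
    at h1
  have h1' : ∫ y, y ∂(Measure.map (⇑(rotCLM θ)) unifSquare) = ∫ x, rotCLM θ x ∂unifSquare :=
    integral_map (rotCLM θ).continuous.measurable.aemeasurable aestronglyMeasurable_id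
  rw [h1'] at h1
  have h2 : ∫ x, rotCLM θ (id x) ∂unifSquare = rotCLM θ (∫ x, id x ∂unifSquare) :=
    (rotCLM θ).integral_comp_comm integrable_id_unifSquare
  simp only [id] at h2
  rw [← h1, h2]
  rw [show (∫ (x : EuclideanSpace ℝ (Fin 2)), x ∂unifSquare) = msq from mean_vec_unifSquare]

lemma key_norm (θ φ : ℝ) : ‖rotCLM θ msq - rotCLM φ msq‖ ^ 2 = 1 - Real.cos (θ - φ) := by
  have e0 : ∀ ψ : ℝ, (rotCLM ψ msq : EuclideanSpace ℝ (Fin 2)) 0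
      = (Real.cos ψ - Real.sin ψ) / 2 := by
    intro ψ
    show ((rot ψ) *ᵥ (WithLp.ofLp msq)) 0 = _
    simp [rot, Matrix.mulVec, dotProduct, Fin.sum_univ_two, msq]
    ring
  have e1 : ∀ ψ : ℝ, (rotCLM ψ msq : EuclideanSpace ℝ (Fin 2)) 1
      = (Real.sin ψ + Real.cos ψ) / 2 := by
    intro ψ
    show ((rot ψ) *ᵥ (WithLp.ofLp msq)) 1 = _
    simp [rot, Matrix.mulVec, dotProduct, Fin.sum_univ_two, msq]
    ring
  have h0 : (rotCLM θ msq - rotCLM φ msq) 0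
      = (Real.cos θ - Real.sin θ) / 2 - (Real.cos φ - Real.sin φ) / 2 := by
    rw [PiLp.sub_apply, e0, e0]
  have h1 : (rotCLM θ msq - rotCLM φ msq) 1
      = (Real.sin θ + Real.cos θ) / 2 - (Real.sin φ + Real.cos φ) / 2 := by
    rw [PiLp.sub_apply, e1, e1]
  rw [EuclideanSpace.norm_eq, Real.sq_sqrt (by positivity), Fin.sum_univ_two, h0, h1]
  simp only [Real.norm_eq_abs, sq_abs]
  rw [Real.cos_sub]
  nlinarith [Real.sin_sq_add_cos_sq θ, Real.sin_sq_add_cos_sq φ]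

/-- Let `μ` be the uniform probability measure on `[0,1]²` and `θ, φ ∈ ℝ`.
Any square-integrable random vectors `U, V` (on any probability space) whose laws are the
pushforwards `(R_θ)_#μ` and `(R_φ)_#μ` satisfy `𝔼‖U − V‖² ≥ 1 − cos(θ − φ)`; consequently
the squared quadratic Wasserstein distance between `(R_θ)_#μ` and `(R_φ)_#μ` is at least
`1 − cos(θ − φ)`. -/
theorem stmt_16 (θ φ : ℝ)
    {Ω' : Type*} [MeasurableSpace Ω'] (ℙ' : Measure Ω') [IsProbabilityMeasure ℙ']
    (U V : Ω' → EuclideanSpace ℝ (Fin 2))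
    (hU : MemLp U 2 ℙ') (hV : MemLp V 2 ℙ')
    (hlawU : Measure.map U ℙ' =
      Measure.map (fun x => (WithLp.toLp 2 ((rot θ).mulVec (WithLp.ofLp x)) : EuclideanSpace ℝ (Fin 2))) unifSquare)
    (hlawV : Measure.map V ℙ' =
      Measure.map (fun x => (WithLp.toLp 2 ((rot φ).mulVec (WithLp.ofLp x)) : EuclideanSpace ℝ (Fin 2))) unifSquare) :
    ∫ ω', ‖U ω' - V ω'‖ ^ 2 ∂ℙ' ≥ 1 - Real.cos (θ - φ) := by
  have hf2 : MemLp (fun ω => U ω - V ω) 2 ℙ' := hU.sub hV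
  have hI : ∫ ω, (U ω - V ω) ∂ℙ' = rotCLM θ msq - rotCLM φ msq := by
    rw [integral_sub (hU.integrable one_le_two) (hV.integrable one_le_two),
      mean_rot θ ℙ' U hU hlawU, mean_rot φ ℙ' V hV hlawV]
  have h1 : ‖∫ ω, (U ω - V ω) ∂ℙ'‖ ≤ ∫ ω, ‖U ω - V ω‖ ∂ℙ' :=
    norm_integral_le_integral_norm _
  have h2 : (∫ ω, ‖U ω - V ω‖ ∂ℙ') ^ 2 ≤ ∫ ω, ‖U ω - V ω‖ ^ 2 ∂ℙ' := by
    have hv := ProbabilityTheory.variance_nonneg (fun ω => ‖U ω - V ω‖) ℙ'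
    rw [ProbabilityTheory.variance_eq_sub hf2.norm] at hv
    have he : ∫ ω, ((fun ω => ‖U ω - V ω‖) ^ 2) ω ∂ℙ' = ∫ ω, ‖U ω - V ω‖ ^ 2 ∂ℙ' := by
      simp [Pi.pow_apply]
    linarith [hv, he]
  have h3 : ‖∫ ω, (U ω - V ω) ∂ℙ'‖ ^ 2 ≤ (∫ ω, ‖U ω - V ω‖ ∂ℙ') ^ 2 :=
    pow_le_pow_left₀ (norm_nonneg _) h1 2
  rw [hI, key_norm θ φ] at h3
  exact le_trans h3 h2
end
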